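/- arXiv:1701.06089 — 2 statements merged into one kernel-verified Lean document; each statement's English description precedes it below -/
import Mathlib

section
/- Let V be an irreducible H_q-module on which X = t_3 t_0 is diagonalizable. Then X is multiplicity-free on V: for every eigenvalue μ of X on V, the eigenspace V_X(μ) = {v ∈ V : X v = μ v} has dimension one. -/
/-- The universal DAHA-module data: four invertible operators `t i` with inverses `s i`,
`t i + s i` central among the `t j`, and `t 0 t 1 t 2 t 3 = q⁻¹`. -/
structure HqMod (F : Type*) [Field F] (q : F) (V : Type*) [AddCommGroup V] [Module F V] where
  t : Fin 4 → Module.End F V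
  s : Fin 4 → Module.End F V
  ts : ∀ i, t i * s i = 1
  st : ∀ i, s i * t i = 1
  central : ∀ i j, Commute (t i + s i) (t j)
  prodEq : t 0 * t 1 * t 2 * t 3 = q⁻¹ • (1 : Module.End F V)

namespace HqMod

variable {F : Type*} [Field F] {q : F} {V : Type*} [AddCommGroup V] [Module F V]

/-- `X = t 3 * t 0`. -/
def X (M : HqMod F q V) : Module.End F V := M.t 3 * M.t 0

/-- `X⁻¹ = t 0 ⁻¹ * t 3 ⁻¹`. -/
def Xinv (M : HqMod F q V) : Module.End F V := M.s 0 * M.s 3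

/-- `Y = t 0 * t 1`. -/
def Y (M : HqMod F q V) : Module.End F V := M.t 0 * M.t 1

/-- `Y⁻¹ = t 1 ⁻¹ * t 0 ⁻¹`. -/
def Yinv (M : HqMod F q V) : Module.End F V := M.s 1 * M.s 0

/-- `G₀ = t 0 - t 3 * t 0 * t 3⁻¹`. -/
def G0 (M : HqMod F q V) : Module.End F V := M.t 0 - M.t 3 * M.t 0 * M.s 3

/-- `G₂ = t 2 - t 1 * t 2 * t 1⁻¹`. -/
def G2 (M : HqMod F q V) : Module.End F V := M.t 2 - M.t 1 * M.t 2 * M.s 1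

/-- `A = Y + Y⁻¹`. -/
def A (M : HqMod F q V) : Module.End F V := M.Y + M.Yinv

/-- `B = X + X⁻¹`. -/
def B (M : HqMod F q V) : Module.End F V := M.X + M.Xinv

/-- Irreducibility: `V ≠ 0` and the only subspaces invariant under all `t i` are `⊥` and `⊤`. -/
def Irreducible (M : HqMod F q V) : Prop :=
  Nontrivial V ∧ ∀ W : Submodule F V, (∀ i, ∀ v ∈ W, M.t i v ∈ W) → W = ⊥ ∨ W = ⊤

/-- `(k 0, k 1, k 2, k 3)` is a parameter sequence: each `k i ≠ 0` and
`t i + t i⁻¹ = (k i + k i⁻¹) • 1`. -/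
def IsParamSeq (M : HqMod F q V) (k : Fin 4 → F) : Prop :=
  ∀ i, k i ≠ 0 ∧ M.t i + M.s i = (k i + (k i)⁻¹) • (1 : Module.End F V)

end HqMod

/-- An endomorphism is diagonalizable when its eigenspaces span. -/
def Diagonalizable {F : Type*} [Field F] {V : Type*} [AddCommGroup V] [Module F V]
    (f : Module.End F V) : Prop :=
  (⨆ μ : F, Module.End.eigenspace f μ) = ⊤

/-- A square matrix is tridiagonal. -/
def IsTridiagonal {F : Type*} [Field F] {n : ℕ} (M : Matrix (Fin n) (Fin n) F) : Prop :=
  ∀ i j : Fin n, 1 < ((i : ℤ) - (j : ℤ)).natAbs → M i j = 0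

/-- A square matrix is irreducible tridiagonal: tridiagonal with nonzero sub- and
superdiagonal entries. -/
def IsIrredTridiagonal {F : Type*} [Field F] {n : ℕ} (M : Matrix (Fin n) (Fin n) F) : Prop :=
  IsTridiagonal M ∧ (∀ i j : Fin n, (i : ℤ) - (j : ℤ) = 1 → M i j ≠ 0) ∧
    (∀ i j : Fin n, (j : ℤ) - (i : ℤ) = 1 → M i j ≠ 0)

/-- A Leonard pair on `V`. -/
def IsLeonardPair {F : Type*} [Field F] {V : Type*} [AddCommGroup V] [Module F V]
    (A As : Module.End F V) : Prop :=
  0 < Module.finrank F V ∧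
  (∃ b : Module.Basis (Fin (Module.finrank F V)) F V,
    IsIrredTridiagonal (LinearMap.toMatrix b b A) ∧ (LinearMap.toMatrix b b As).IsDiag) ∧
  (∃ b : Module.Basis (Fin (Module.finrank F V)) F V,
    IsIrredTridiagonal (LinearMap.toMatrix b b As) ∧ (LinearMap.toMatrix b b A).IsDiag)

/-- `θ_r = a q^{2r-d} + a⁻¹ q^{d-2r}`. -/
noncomputable def thetaSeq {F : Type*} [Field F] (q a : F) (d r : ℕ) : F :=
  a * q ^ (2 * (r : ℤ) - (d : ℤ)) + a⁻¹ * q ^ ((d : ℤ) - 2 * (r : ℤ))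

/-- The first split sequence `φ_r` attached to `(a,b,c,d)`. -/
noncomputable def phiSeq {F : Type*} [Field F] (q a b c : F) (d r : ℕ) : F :=
  a⁻¹ * b⁻¹ * q ^ ((d : ℤ) + 1) * (q ^ (r : ℤ) - q ^ (-(r : ℤ)))
    * (q ^ ((r : ℤ) - (d : ℤ) - 1) - q ^ ((d : ℤ) - (r : ℤ) + 1))
    * (q ^ (-(r : ℤ)) - a * b * c * q ^ ((r : ℤ) - (d : ℤ) - 1))
    * (q ^ (-(r : ℤ)) - a * b * c⁻¹ * q ^ ((r : ℤ) - (d : ℤ) - 1))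

/-- `(a,b,c,d)` is a Huang data of the pair `(A, As)`. -/
def IsHuangData {F : Type*} [Field F] {V : Type*} [AddCommGroup V] [Module F V]
    (q : F) (A As : Module.End F V) (a b c : F) (d : ℕ) : Prop :=
  a ≠ 0 ∧ b ≠ 0 ∧ c ≠ 0 ∧ Module.finrank F V = d + 1 ∧
  (∃ bas : Module.Basis (Fin (d + 1)) F V,
    LinearMap.toMatrix bas bas A = Matrix.of (fun i j : Fin (d + 1) =>
      if (i : ℕ) = (j : ℕ) then thetaSeq q a d (i : ℕ)
      else if (i : ℕ) = (j : ℕ) + 1 then 1 else 0) ∧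
    LinearMap.toMatrix bas bas As = Matrix.of (fun i j : Fin (d + 1) =>
      if (i : ℕ) = (j : ℕ) then thetaSeq q b d (i : ℕ)
      else if (j : ℕ) = (i : ℕ) + 1 then phiSeq q a b c d (j : ℕ) else 0)) ∧
  (∃ bas : Module.Basis (Fin (d + 1)) F V,
    LinearMap.toMatrix bas bas A = Matrix.of (fun i j : Fin (d + 1) =>
      if (i : ℕ) = (j : ℕ) then thetaSeq q a d (d - (i : ℕ))
      else if (i : ℕ) = (j : ℕ) + 1 then 1 else 0) ∧
    LinearMap.toMatrix bas bas As = Matrix.of (fun i j : Fin (d + 1) =>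
      if (i : ℕ) = (j : ℕ) then thetaSeq q b d (i : ℕ)
      else if (j : ℕ) = (i : ℕ) + 1 then phiSeq q a⁻¹ b c d (j : ℕ) else 0))

/-- `G(λ,s,t) = λ⁻²(λ-st)(λ-st⁻¹)(λ-s⁻¹t)(λ-s⁻¹t⁻¹)`. -/
noncomputable def Gfun {F : Type*} [Field F] (lam s t : F) : F :=
  (lam ^ 2)⁻¹ * ((lam - s * t) * (lam - s * t⁻¹) * (lam - s⁻¹ * t) * (lam - s⁻¹ * t⁻¹))



namespace Stmt16Aux

variable {F : Type*} [Field F]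

theorem abs_main {U W : Type*} [AddCommGroup U] [Module F U] [AddCommGroup W] [Module F W]
    [FiniteDimensional F U] [FiniteDimensional F W]
    (a : U →ₗ[F] U) (e : W →ₗ[F] W) (b : W →ₗ[F] U) (c : U →ₗ[F] W)
    (κ α β : F) (hβ : α + β = κ)
    (h1 : ∀ u, a (a u) + b (c u) = κ • a u - u)
    (h4 : ∀ w, c (b w) + e (e w) = κ • e w - w)
    (hab : ∀ w, a (b w) = α • b w)
    (hec : ∀ u, e (c u) = β • c u)
    (hqa : ∀ u, a (a u) - (α + κ) • a u + (α * κ) • u = 0)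
    (hqe : ∀ w, e (e w) - (β + κ) • e w + (β * κ) • w = 0) :
    ∀ u, a u = α • u := by
  by_cases hακ : α = κ
  · -- degenerate case : `β = 0`.
    subst hακ
    have hβ0 : β = 0 := by linear_combination hβ
    subst hβ0
    by_cases hκ0 : α = 0
    · -- `α = κ = 0`
      subst hκ0
      intro u
      have haa : a (a u) = 0 := by linear_combination (norm := module) hqa u
      have h2 : b (c u) = -u := by
        have h1u := h1 u
        linear_combination (norm := module) h1u - haa
      have h3 : a u = a (-(b (c u))) := by rw [h2]; simp
      rw [h3, map_neg, hab]
      simp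
    · -- `κ = α ≠ 0`, `β = 0`
      -- Step 1: `e = 0`.
      have heinj : Function.Injective (e - α • (1 : W →ₗ[F] W)) := by
        rw [← LinearMap.ker_eq_bot, LinearMap.ker_eq_bot']
        intro w hw
        have hew : e w = α • w := by
          have : e w - α • w = 0 := hw
          linear_combination (norm := module) this
        have hcb : c (b w) = -w := by
          have h4w := h4 w
          rw [hew, map_smul, hew] at h4w
          linear_combination (norm := module) h4w
        have hw0 : e w = 0 := by
          have hwc : w = c (-(b w)) := by rw [map_neg, hcb]; simp
          rw [hwc, hec]; simp
        rw [hw0] at hew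
        rcases smul_eq_zero.mp hew.symm with h | h
        · exact absurd h hκ0
        · exact h
      have hesurj := (LinearMap.injective_iff_surjective).mp heinj
      have he0 : ∀ w, e w = 0 := by
        intro w
        obtain ⟨x, hx⟩ := hesurj w
        have hx' : w = e x - α • x := by
          rw [← hx]; simp [LinearMap.sub_apply]
        have hq : e (e x) - α • e x = 0 := by linear_combination (norm := module) hqe x
        rw [hx', map_sub, map_smul]
        linear_combination (norm := module) hq
      have hcb1 : ∀ w, c (b w) = -w := by
        intro w
        have h4w := h4 w
        rw [he0, he0] at h4w
        simpa using h4w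
      -- Step 2: `a = κ`.
      intro u
      have E1 := h1 u
      have E6 : a (a (a u)) - (2*α) • (a (a u)) + (α*α) • (a u) = 0 := by
        linear_combination (norm := module) hqa (a u)
      have E7 : a (a (a u)) + a (b (c u)) = α • (a (a u)) - a u := by
        have := congrArg a E1
        simpa [map_add, map_sub, map_smul] using this
      have haB1 : a (b (c u)) = (-α) • (a (a u)) + (α*α-1) • (a u) := by
        linear_combination (norm := module) E7 - E6
      have hB1 : b (c u) = α • a u - u - a (a u) := by
        linear_combination (norm := module) E1
      have E3 := h1 (b (c u))
      have E4 : a (a (b (c u))) - (2*α) • (a (b (c u))) + (α*α) • (b (c u)) = 0 := by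
        linear_combination (norm := module) hqa (b (c u))
      have E5 : b (c (b (c u))) = -(b (c u)) := by
        rw [hcb1 (c u), map_neg]
      have key : α • (a (b (c u))) = (α*α) • (b (c u)) := by
        linear_combination (norm := module) E3 - E4 - E5
      rw [haB1, hB1] at key
      have final : α • (a u - α • u) = 0 := by
        linear_combination (norm := module) -key
      rcases smul_eq_zero.mp final with h | h
      · exact absurd h hκ0
      · linear_combination (norm := module) h
  · -- main case : `α ≠ κ`
    have hinj : Function.Injective (a - κ • (1 : U →ₗ[F] U)) := by
      rw [← LinearMap.ker_eq_bot, LinearMap.ker_eq_bot']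
      intro u hu
      have hau : a u = κ • u := by
        have : a u - κ • u = 0 := hu
        linear_combination (norm := module) this
      have hbc : b (c u) = -u := by
        have h1u := h1 u
        rw [hau, map_smul, hau] at h1u
        linear_combination (norm := module) h1u
      have h2 : a u = α • u := by
        have h3 : u = b (-(c u)) := by rw [map_neg, hbc]; simp
        rw [h3, hab]
      rw [hau] at h2
      have h4' : (κ - α) • u = 0 := by linear_combination (norm := module) h2
      rcases smul_eq_zero.mp h4' with h | h
      · exact absurd (sub_eq_zero.mp h).symm hακ
      · exact h
    have hsurj := (LinearMap.injective_iff_surjective).mp hinj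
    intro u
    obtain ⟨x, hx⟩ := hsurj u
    have hx' : u = a x - κ • x := by rw [← hx]; simp [LinearMap.sub_apply]
    have hq := hqa x
    rw [hx', map_sub, map_smul]
    linear_combination (norm := module) hq



variable {F : Type*} [Field F] {V : Type*} [AddCommGroup V] [Module F V]

/-- `u² = κu • u - 1` from `u + u' = κu • 1` and `u' * u = 1`. -/
theorem pair_usq (u u' : Module.End F V) (hu'u : u' * u = 1) (κu : F)
    (hκu : u + u' = κu • (1 : Module.End F V)) : u * u = κu • u - 1 := by
  have h : (u + u') * u = (κu • (1 : Module.End F V)) * u := by rw [hκu]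
  rw [add_mul, hu'u, smul_mul_assoc, one_mul] at h
  linear_combination (norm := noncomm_ring) h

/-- Key commutation : `(Z + Z⁻¹) * u = u * (Z + Z⁻¹)` where `Z = u * w`. -/
theorem pair_comm (u u' w w' : Module.End F V)
    (huu' : u * u' = 1) (hu'u : u' * u = 1) (hww' : w * w' = 1) (hw'w : w' * w = 1)
    (κu κw : F) (hκu : u + u' = κu • (1 : Module.End F V))
    (hκw : w + w' = κw • (1 : Module.End F V)) :
    (u * w + w' * u') * u = u * (u * w + w' * u') := by
  have hu' : u' = κu • (1 : Module.End F V) - u := by linear_combination (norm := noncomm_ring) hκu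
  have hw' : w' = κw • (1 : Module.End F V) - w := by linear_combination (norm := noncomm_ring) hκw
  have husq : u * u = κu • u - 1 := pair_usq u u' hu'u κu hκu
  -- LHS : (u*w)*u + w'*(u'*u) = u*w*u + w'
  have hL : (u * w + w' * u') * u = u * w * u + (κw • (1:Module.End F V) - w) := by
    rw [add_mul, mul_assoc w' u' u, hu'u, mul_one, hw']
  -- RHS : u*(u*w) + u*(w'*u')
  have hR : u * (u * w + w' * u') = u * w * u + (κw • (1:Module.End F V) - w) := by
    rw [mul_add]
    have h1 : u * (u * w) = κu • (u * w) - w := by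
      rw [← mul_assoc, husq]
      simp only [sub_mul, smul_mul_assoc, one_mul]
    have h2 : u * (w' * u') = κw • (1:Module.End F V) - κu • (u * w) + u * w * u := by
      rw [hw', hu', ← mul_assoc]
      have expand : u * (κw • (1:Module.End F V) - w) * (κu • (1:Module.End F V) - u) =
          (κw * κu) • u - κw • (u * u) - κu • (u * w) + u * w * u := by
        simp only [mul_sub, sub_mul, smul_mul_assoc, mul_smul_comm, one_mul, mul_one, smul_smul,
          mul_assoc]
        module
      rw [expand, husq]
      module
    rw [h1, h2]
    simp only [mul_assoc]
    module
  rw [hL, hR]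

/-- Pointwise key lemma : for `Z v = θ • v`,  `Z (Z (u v)) = (θ+θ') • Z (u v) - u v`. -/
theorem pair_kl (u u' w w' : Module.End F V)
    (huu' : u * u' = 1) (hu'u : u' * u = 1) (hww' : w * w' = 1) (hw'w : w' * w = 1)
    (κu κw : F) (hκu : u + u' = κu • (1 : Module.End F V))
    (hκw : w + w' = κw • (1 : Module.End F V))
    (θ θ' : F) (hθθ' : θ * θ' = 1)
    (v : V) (hv : (u * w) v = θ • v) :
    (u * w) ((u * w) (u v)) = (θ + θ') • (u * w) (u v) - u v := by
  set Z := u * w with hZ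
  have hθ0 : θ ≠ 0 := by rintro rfl; simp at hθθ'
  have hZZi : Z * (w' * u') = 1 := by
    rw [hZ]
    calc u * w * (w' * u') = u * (w * w') * u' := by noncomm_ring
    _ = 1 := by rw [hww', mul_one, huu']
  have hZiZ : (w' * u') * Z = 1 := by
    rw [hZ]
    calc w' * u' * (u * w) = w' * (u' * u) * w := by noncomm_ring
    _ = 1 := by rw [hu'u, mul_one, hw'w]
  -- (w'u') v = θ' • v
  have hZiv : (w' * u') v = θ' • v := by
    have h1 : (w' * u') (Z v) = v := by
      have := congrArg (fun f : Module.End F V => f v) hZiZ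
      simpa using this
    rw [hv, map_smul] at h1
    have hθ' : θ' = θ⁻¹ := by field_simp; linear_combination hθθ'
    rw [hθ', eq_inv_smul_iff₀ hθ0]
    exact h1
  -- B := Z + w'u' commutes with u
  have hBu := pair_comm u u' w w' huu' hu'u hww' hw'w κu κw hκu hκw
  rw [← hZ] at hBu
  have hBuv : (Z + w' * u') (u v) = u ((Z + w' * u') v) := by
    have := congrArg (fun f : Module.End F V => f v) hBu
    simpa using this
  have hBv : (Z + w' * u') v = (θ + θ') • v := by
    rw [LinearMap.add_apply, hv, hZiv]
    module
  rw [hBv, map_smul] at hBuv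
  -- hBuv : Z (u v) + (w'u') (u v) = (θ+θ') • u v
  have h2 : (w' * u') (u v) = (θ + θ') • (u v) - Z (u v) := by
    have : Z (u v) + (w' * u') (u v) = (θ + θ') • (u v) := by
      simpa [LinearMap.add_apply] using hBuv
    linear_combination (norm := module) this
  -- apply Z : Z ((w'u')(uv)) = u v
  have h3 : Z ((w' * u') (u v)) = u v := by
    have := congrArg (fun f : Module.End F V => f (u v)) hZZi
    simp only [Module.End.mul_apply, Module.End.one_apply] at this
    exact this
  rw [h2, map_sub, map_smul] at h3
  linear_combination (norm := module) -h3

variable (u u' w w' Z : Module.End F V) in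
theorem pair_relations
    (huu' : u * u' = 1) (hu'u : u' * u = 1) (hww' : w * w' = 1) (hw'w : w' * w = 1)
    (κu κw : F) (hκu : u + u' = κu • (1 : Module.End F V))
    (hκw : w + w' = κw • (1 : Module.End F V))
    (hZ : Z = u * w) (θ θ' : F) (hθθ' : θ * θ' = 1) (hne : θ ≠ θ')
    (A C : Module.End F V)
    (hA : A = (θ - θ')⁻¹ • ((Z - θ' • 1) * u))
    (hC : C = (θ' - θ)⁻¹ • ((Z - θ • 1) * u))
    (x : V) (hx : Z x = θ • x) :
    A x + C x = u x ∧ Z (A x) = θ • A x ∧ Z (C x) = θ' • C x ∧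
    (A (A x) + A (C x) = κu • A x - x) ∧ (C (A x) + C (C x) = κu • C x) ∧
    ((θ*θ) • A (A x) + A (C x)
        = (θ*κu*κw - θ*θ*κu*κu) • x + (2*(θ*θ)*κu - θ*κw) • A x - x) ∧
    ((θ*θ) • C (A x) + C (C x) = ((θ*θ)*κu + κu - θ*κw) • C x) := by
  have hθ0 : θ ≠ 0 := by rintro rfl; simp at hθθ'
  have hθ'0 : θ' ≠ 0 := by rintro rfl; simp at hθθ'
  have hsub : θ - θ' ≠ 0 := sub_ne_zero.mpr hne
  have hsub' : θ' - θ ≠ 0 := sub_ne_zero.mpr (Ne.symm hne)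
  -- A y + C y = u y for every y
  have hACu : ∀ y : V, A y + C y = u y := by
    intro y
    rw [hA, hC]
    simp only [LinearMap.smul_apply, Module.End.mul_apply, LinearMap.sub_apply,
      Module.End.one_apply]
    match_scalars <;> (field_simp; try ring)
  -- pointwise KL facts
  have hKL : ∀ y : V, (Z y = θ • y ∨ Z y = θ' • y) →
      Z (Z (u y)) = (θ + θ') • Z (u y) - u y := by
    rintro y (hy | hy)
    · have := pair_kl u u' w w' huu' hu'u hww' hw'w κu κw hκu hκw θ θ' hθθ' y (by rw [← hZ]; exact hy)
      rw [← hZ] at this; exact this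
    · have h2 : θ' * θ = 1 := by linear_combination hθθ'
      have := pair_kl u u' w w' huu' hu'u hww' hw'w κu κw hκu hκw θ' θ h2 y (by rw [← hZ]; exact hy)
      rw [← hZ] at this
      rw [this]; module
  -- memberships
  have hAmem : ∀ y : V, (Z y = θ • y ∨ Z y = θ' • y) → Z (A y) = θ • A y := by
    intro y hy
    rw [hA]
    simp only [LinearMap.smul_apply, Module.End.mul_apply, LinearMap.sub_apply,
      Module.End.one_apply, map_smul, map_sub]
    rw [hKL y hy]
    match_scalars
    · ring
    · field_simp
      ring_nf
      linear_combination hθθ'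
  have hCmem : ∀ y : V, (Z y = θ • y ∨ Z y = θ' • y) → Z (C y) = θ' • C y := by
    intro y hy
    rw [hC]
    simp only [LinearMap.smul_apply, Module.End.mul_apply, LinearMap.sub_apply,
      Module.End.one_apply, map_smul, map_sub]
    rw [hKL y hy]
    match_scalars
    · ring
    · field_simp
      ring_nf
      linear_combination hθθ'
  -- separation
  have hsep : ∀ p q' : V, Z p = θ • p → Z q' = θ' • q' → p + q' = 0 → p = 0 ∧ q' = 0 := by
    intro p r hp hr hpr
    have h1 : Z (p + r) = 0 := by rw [hpr, map_zero]
    rw [map_add, hp, hr] at h1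
    have h2 : θ' • p + θ' • r = 0 := by
      rw [← smul_add, hpr, smul_zero]
    have h3 : (θ - θ') • p = 0 := by linear_combination (norm := module) h1 - h2
    have hp0 : p = 0 := by
      rcases smul_eq_zero.mp h3 with h | h
      · exact absurd h hsub
      · exact h
    refine ⟨hp0, ?_⟩
    rw [hp0] at hpr; simpa using hpr
  -- quadratic identities pointwise
  have husq := pair_usq u u' hu'u κu hκu
  have hwsq := pair_usq w w' hw'w κw hκw
  have huy : ∀ y : V, u (u y) = κu • u y - y := by
    intro y
    have := congrArg (fun f : Module.End F V => f y) husq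
    simpa [Module.End.mul_apply, LinearMap.sub_apply, LinearMap.smul_apply] using this
  have hwy : ∀ y : V, w (w y) = κw • w y - y := by
    intro y
    have := congrArg (fun f : Module.End F V => f y) hwsq
    simpa [Module.End.mul_apply, LinearMap.sub_apply, LinearMap.smul_apply] using this
  -- w pointwise on eigenvectors
  have hw_op : w = u' * Z := by
    rw [hZ, ← mul_assoc, hu'u, one_mul]
  have hu'y : ∀ y : V, u' y = κu • y - u y := by
    intro y
    have := congrArg (fun f : Module.End F V => f y) hκu
    simp only [LinearMap.add_apply, LinearMap.smul_apply, Module.End.one_apply] at this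
    linear_combination (norm := module) this
  have hwθ : ∀ y : V, Z y = θ • y → w y = (θ*κu) • y - θ • u y := by
    intro y hy
    have h1 : w y = u' (Z y) := by
      rw [hw_op]; simp [Module.End.mul_apply]
    rw [h1, hy, map_smul, hu'y]
    module
  have hwθ' : ∀ y : V, Z y = θ' • y → w y = (θ'*κu) • y - θ' • u y := by
    intro y hy
    have h1 : w y = u' (Z y) := by
      rw [hw_op]; simp [Module.End.mul_apply]
    rw [h1, hy, map_smul, hu'y]
    module
  -- basic memberships for x
  have hAx := hAmem x (Or.inl hx)
  have hCx := hCmem x (Or.inl hx)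
  have hAAx := hAmem (A x) (Or.inl hAx)
  have hCAx := hCmem (A x) (Or.inl hAx)
  have hACx := hAmem (C x) (Or.inr hCx)
  have hCCx := hCmem (C x) (Or.inr hCx)
  -- R1 / R3
  have hx_dec := hACu x
  have hA_dec := hACu (A x)
  have hC_dec := hACu (C x)
  have hPQ : (A (A x) + A (C x) - κu • A x + x) + (C (A x) + C (C x) - κu • C x) = 0 := by
    have h1 := huy x
    have hu_dec : u (A x) + u (C x) = u (u x) := by rw [← map_add, hx_dec]
    linear_combination (norm := module) hA_dec + hC_dec + hu_dec + h1 - κu • hx_dec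
  have hP := hsep _ _ (by
      simp only [map_add, map_sub, map_smul]
      rw [hAAx, hACx, hAx, hx]
      module)
    (by
      simp only [map_add, map_sub, map_smul]
      rw [hCAx, hCCx, hCx]
      module) hPQ
  have c3 : A (A x) + A (C x) = κu • A x - x := by
    have := hP.1; linear_combination (norm := module) this
  have c4 : C (A x) + C (C x) = κu • C x := by
    have := hP.2; linear_combination (norm := module) this
  -- R1' / R3'
  have e1 : w x = (θ*κu) • x - θ • A x - θ • C x := by
    have h1 := hwθ x hx
    linear_combination (norm := module) h1 + θ • hx_dec
  have e2 : w (A x) = (θ*κu) • A x - θ • A (A x) - θ • C (A x) := by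
    have h1 := hwθ (A x) hAx
    linear_combination (norm := module) h1 + θ • hA_dec
  have e3 : w (C x) = (θ'*κu) • C x - θ' • A (C x) - θ' • C (C x) := by
    have h1 := hwθ' (C x) hCx
    linear_combination (norm := module) h1 + θ' • hC_dec
  have e4 : w (w x) = (θ*κu) • w x - θ • w (A x) - θ • w (C x) := by
    conv_lhs => rw [e1]
    simp only [map_sub, map_smul]
  have e5 := hwy x
  have hbig : ((θ*θ) • A (A x) + (θ*θ') • A (C x) - (θ*κu*κw - θ*θ*κu*κu) • x
        - (2*(θ*θ)*κu - θ*κw) • A x + x)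
      + ((θ*θ) • C (A x) + (θ*θ') • C (C x) - ((θ*θ)*κu + (θ*θ')*κu - θ*κw) • C x) = 0 := by
    linear_combination (norm := module)
      (-1 : F) • e4 + e5 + θ • e2 + θ • e3 - (θ*κu - κw) • e1
  have hQ := hsep _ _ (by
      simp only [map_add, map_sub, map_smul]
      rw [hAAx, hACx, hAx, hx]
      module)
    (by
      simp only [map_add, map_sub, map_smul]
      rw [hCAx, hCCx, hCx]
      module) hbig
  have c5 : (θ*θ) • A (A x) + A (C x)
      = (θ*κu*κw - θ*θ*κu*κu) • x + (2*(θ*θ)*κu - θ*κw) • A x - x := by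
    have h1 := hQ.1
    rw [hθθ', one_smul] at h1
    linear_combination (norm := module) h1
  have c6 : (θ*θ) • C (A x) + C (C x) = ((θ*θ)*κu + κu - θ*κw) • C x := by
    have h1 := hQ.2
    rw [hθθ', one_smul] at h1
    linear_combination (norm := module) h1
  exact ⟨hx_dec, hAx, hCx, c3, c4, c5, c6⟩


/-- The diagonal scalar. -/
noncomputable def pairAlpha (κu κw θ : F) : F := (κu * θ - κw) / (θ - θ⁻¹)

variable (u u' w w' Z : Module.End F V) in
theorem pair_main [FiniteDimensional F V]
    (huu' : u * u' = 1) (hu'u : u' * u = 1) (hww' : w * w' = 1) (hw'w : w' * w = 1)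
    (κu κw : F) (hκu : u + u' = κu • (1 : Module.End F V))
    (hκw : w + w' = κw • (1 : Module.End F V))
    (hZ : Z = u * w) (θ : F) (hθ0 : θ ≠ 0) (hθ2 : θ * θ ≠ 1) :
    ∀ v, Z v = θ • v →
      (Z (u v - pairAlpha κu κw θ • v) = θ⁻¹ • (u v - pairAlpha κu κw θ • v)) ∧
      (u (u v - pairAlpha κu κw θ • v)
        = (κu - pairAlpha κu κw θ) • (u v - pairAlpha κu κw θ • v)
          + (κu * pairAlpha κu κw θ - 1 - pairAlpha κu κw θ * pairAlpha κu κw θ) • v) := by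
  set θ' := θ⁻¹ with hθ'
  set α := pairAlpha κu κw θ with hα
  set β := κu - α with hβ
  have hθθ' : θ * θ' = 1 := mul_inv_cancel₀ hθ0
  have hθ'θ : θ' * θ = 1 := inv_mul_cancel₀ hθ0
  have hθ'0 : θ' ≠ 0 := inv_ne_zero hθ0
  have hne : θ ≠ θ' := by
    intro h
    rw [← h] at hθθ'
    exact hθ2 hθθ'
  have hne' : θ' ≠ θ := Ne.symm hne
  have hq1 : θ * θ - 1 ≠ 0 := by
    intro h
    exact hθ2 (by linear_combination h)
  have hq2 : θ' * θ' - 1 ≠ 0 := by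
    intro h
    apply hq1
    have h2 : (θ*θ) * (θ'*θ'-1) = (θ*θ') * (θ*θ') - θ*θ := by ring
    rw [h, hθθ', mul_zero] at h2
    linear_combination h2
  have hd : θ - θ⁻¹ ≠ 0 := by
    rw [← hθ']; exact sub_ne_zero.mpr hne
  -- the characterizing equation for α and β
  have hαchar : (θ * θ - 1) * α = θ * θ * κu - θ * κw := by
    rw [hα, pairAlpha, show θ - θ⁻¹ = (θ*θ-1)/θ by field_simp, div_div_eq_mul_div,
      mul_div_assoc', mul_div_cancel_left₀ _ hq1]
    ring
  have hβchar : (θ' * θ' - 1) * β = θ' * θ' * κu - θ' * κw := by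
    rw [hβ]
    calc (θ'*θ'-1)*(κu-α) = (θ'*θ')*((1-θ*θ)*(κu-α)) := by
          rw [hθ']; field_simp
      _ = (θ'*θ')*(κu - θ*κw) := by
          rw [show (1-θ*θ)*(κu-α) = κu - θ*κw from by linear_combination hαchar]
      _ = θ'*θ'*κu - θ'*κw := by rw [hθ']; field_simp
  -- the A and C operators
  set A : Module.End F V := (θ - θ')⁻¹ • ((Z - θ' • 1) * u) with hA
  set C : Module.End F V := (θ' - θ)⁻¹ • ((Z - θ • 1) * u) with hC
  have rel := fun (x : V) (hx : Z x = θ • x) =>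
    pair_relations u u' w w' Z huu' hu'u hww' hw'w κu κw hκu hκw hZ θ θ' hθθ' hne A C hA hC x hx
  have rel' := fun (y : V) (hy : Z y = θ' • y) =>
    pair_relations u u' w w' Z huu' hu'u hww' hw'w κu κw hκu hκw hZ θ' θ hθ'θ hne' C A hC hA y hy
  -- scalar facts about CA etc.
  have hCA : ∀ x, Z x = θ • x → C (A x) = α • C x := by
    intro x hx
    obtain ⟨-, -, -, -, c4, -, c6⟩ := rel x hx
    have h1 : (θ*θ - 1) • C (A x) = (θ*θ - 1) • (α • C x) := by
      rw [smul_smul, hαchar]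
      linear_combination (norm := module) c6 - c4
    exact smul_right_injective V hq1 h1
  have hCC : ∀ x, Z x = θ • x → C (C x) = β • C x := by
    intro x hx
    obtain ⟨-, -, -, -, c4, -, -⟩ := rel x hx
    rw [hCA x hx] at c4
    rw [hβ]
    linear_combination (norm := module) c4
  have hqa : ∀ x, Z x = θ • x → A (A x) - (α + κu) • A x + (α * κu) • x = 0 := by
    intro x hx
    obtain ⟨-, -, -, c3, -, c5, -⟩ := rel x hx
    have h1 : (θ*θ - 1) • (A (A x) - (α + κu) • A x + (α * κu) • x) =
        (θ*θ-1) • (0 : V) := by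
      rw [smul_zero]
      have e1 : ((θ*θ-1) * (α + κu)) = 2*(θ*θ)*κu - θ*κw - κu := by
        linear_combination hαchar
      have e2 : ((θ*θ-1) * (α * κu)) = -(θ*κu*κw - θ*θ*κu*κu) := by
        linear_combination κu * hαchar
      have goal1 : (θ*θ-1) • A (A x) = (2*(θ*θ)*κu - θ*κw - κu) • A x
          + (θ*κu*κw - θ*θ*κu*κu) • x := by
        linear_combination (norm := module) c5 - c3
      rw [smul_add, smul_sub, smul_smul, smul_smul, e1, e2, goal1]
      module
    exact smul_right_injective V hq1 h1
  -- primed versions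
  have hAC' : ∀ y, Z y = θ' • y → A (C y) = β • A y := by
    intro y hy
    obtain ⟨-, -, -, -, c4, -, c6⟩ := rel' y hy
    have h1 : (θ'*θ' - 1) • A (C y) = (θ'*θ' - 1) • (β • A y) := by
      rw [smul_smul, hβchar]
      linear_combination (norm := module) c6 - c4
    exact smul_right_injective V hq2 h1
  have hAA' : ∀ y, Z y = θ' • y → A (A y) = α • A y := by
    intro y hy
    obtain ⟨-, -, -, -, c4, -, -⟩ := rel' y hy
    rw [hAC' y hy] at c4
    rw [hβ] at c4
    linear_combination (norm := module) c4
  have hqe : ∀ y, Z y = θ' • y → C (C y) - (β + κu) • C y + (β * κu) • y = 0 := by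
    intro y hy
    obtain ⟨-, -, -, c3, -, c5, -⟩ := rel' y hy
    have h1 : (θ'*θ' - 1) • (C (C y) - (β + κu) • C y + (β * κu) • y) =
        (θ'*θ'-1) • (0 : V) := by
      rw [smul_zero]
      have e1 : ((θ'*θ'-1) * (β + κu)) = 2*(θ'*θ')*κu - θ'*κw - κu := by
        linear_combination hβchar
      have e2 : ((θ'*θ'-1) * (β * κu)) = -(θ'*κu*κw - θ'*θ'*κu*κu) := by
        linear_combination κu * hβchar
      have goal1 : (θ'*θ'-1) • C (C y) = (2*(θ'*θ')*κu - θ'*κw - κu) • C y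
          + (θ'*κu*κw - θ'*θ'*κu*κu) • y := by
        linear_combination (norm := module) c5 - c3
      rw [smul_add, smul_sub, smul_smul, smul_smul, e1, e2, goal1]
      module
    exact smul_right_injective V hq2 h1
  -- bundled maps
  set P := Module.End.eigenspace Z θ with hP
  set Q := Module.End.eigenspace Z θ' with hQ
  have memP : ∀ x : V, x ∈ P ↔ Z x = θ • x := fun x => Module.End.mem_eigenspace_iff
  have memQ : ∀ x : V, x ∈ Q ↔ Z x = θ' • x := fun x => Module.End.mem_eigenspace_iff
  have hrA : ∀ x ∈ P, A x ∈ P := by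
    intro x hx
    rw [memP] at hx ⊢
    exact (rel x hx).2.1
  have hrC : ∀ x ∈ P, C x ∈ Q := by
    intro x hx
    rw [memP] at hx; rw [memQ]
    exact (rel x hx).2.2.1
  have hrB : ∀ y ∈ Q, A y ∈ P := by
    intro y hy
    rw [memQ] at hy; rw [memP]
    exact (rel' y hy).2.2.1
  have hrE : ∀ y ∈ Q, C y ∈ Q := by
    intro y hy
    rw [memQ] at hy ⊢
    exact (rel' y hy).2.1
  set abar : P →ₗ[F] P := A.restrict hrA with habar
  set cbar : P →ₗ[F] Q := C.restrict hrC with hcbar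
  set bbar : Q →ₗ[F] P := A.restrict hrB with hbbar
  set ebar : Q →ₗ[F] Q := C.restrict hrE with hebar
  have key : ∀ x : P, abar x = α • x := by
    apply abs_main abar ebar bbar cbar κu α β
    · rw [hβ]; ring
    · intro x
      apply Subtype.ext
      have hx := (memP x).mp x.2
      obtain ⟨-, -, -, c3, -, -, -⟩ := rel x hx
      simp only [habar, hbbar, hcbar, LinearMap.restrict_coe_apply, Submodule.coe_add,
        Submodule.coe_sub, SetLike.val_smul]
      exact c3
    · intro y
      apply Subtype.ext
      have hy := (memQ y).mp y.2
      obtain ⟨-, -, -, c3, -, -, -⟩ := rel' y hy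
      simp only [habar, hbbar, hcbar, hebar, LinearMap.restrict_coe_apply, Submodule.coe_add,
        Submodule.coe_sub, SetLike.val_smul]
      linear_combination (norm := module) c3
    · intro y
      apply Subtype.ext
      have hy := (memQ y).mp y.2
      simp only [habar, hbbar, LinearMap.restrict_coe_apply, SetLike.val_smul]
      exact hAA' y hy
    · intro x
      apply Subtype.ext
      have hx := (memP x).mp x.2
      simp only [hcbar, hebar, LinearMap.restrict_coe_apply, SetLike.val_smul]
      exact hCC x hx
    · intro x
      apply Subtype.ext
      have hx := (memP x).mp x.2
      simp only [habar, LinearMap.restrict_coe_apply, Submodule.coe_add, Submodule.coe_sub,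
        SetLike.val_smul, Submodule.coe_zero]
      have := hqa x hx
      linear_combination (norm := module) this
    · intro y
      apply Subtype.ext
      have hy := (memQ y).mp y.2
      simp only [hebar, LinearMap.restrict_coe_apply, Submodule.coe_add, Submodule.coe_sub,
        SetLike.val_smul, Submodule.coe_zero]
      have := hqe y hy
      linear_combination (norm := module) this
  have hAval : ∀ v, Z v = θ • v → A v = α • v := by
    intro v hv
    have := key ⟨v, (memP v).mpr hv⟩
    have h2 := congrArg (Subtype.val) this
    simpa [habar, LinearMap.restrict_coe_apply] using h2
  -- conclusions
  intro v hv
  have hCv : C v = u v - α • v := by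
    have h1 := (rel v hv).1
    rw [hAval v hv] at h1
    linear_combination (norm := module) h1
  constructor
  · rw [← hCv]
    exact (rel v hv).2.2.1
  · rw [← hCv]
    have hCvQ : Z (C v) = θ' • C v := (rel v hv).2.2.1
    have hdec := (rel' (C v) hCvQ).1
    -- hdec : C (C v) + A (C v) = u (C v)
    have h1 : A (C v) = (κu * α - 1 - α * α) • v := by
      obtain ⟨-, -, -, c3, -, -, -⟩ := rel v hv
      have hAv := hAval v hv
      have hAAv : A (A v) = (α*α) • v := by rw [hAv, map_smul, hAv, smul_smul]
      linear_combination (norm := module) c3 - hAAv + κu • hAv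
    have h2 : C (C v) = β • C v := hCC v hv
    rw [h1, h2] at hdec
    linear_combination (norm := module) -hdec


/-- For a diagonalizable operator, `(Z - θ)² m = 0` implies `Z m = θ • m`. -/
theorem kersq (Z : Module.End F V) (hdiag : (⨆ μ : F, Module.End.eigenspace Z μ) = ⊤)
    (θ : F) (m : V) (h : Z (Z m) - (2*θ) • Z m + (θ*θ) • m = 0) : Z m = θ • m := by
  set y := Z m - θ • m with hy
  have hZy : Z y = θ • y := by
    rw [hy, map_sub, map_smul]
    have : Z (Z m) = (2*θ) • Z m - (θ*θ) • m := by linear_combination (norm := module) h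
    rw [this]
    module
  set R : Submodule F V := ⨆ l : {l : F // l ≠ θ}, Module.End.eigenspace Z l.val with hR
  have htop : Module.End.eigenspace Z θ ⊔ R = ⊤ := by
    rw [← top_le_iff, ← hdiag]
    apply iSup_le
    intro lam
    by_cases hlam : lam = θ
    · rw [hlam]; exact le_sup_of_le_left le_rfl
    · exact le_sup_of_le_right (le_iSup (fun l : {l : F // l ≠ θ} =>
        Module.End.eigenspace Z l.val) ⟨lam, hlam⟩)
  obtain ⟨p, hp, r, hr, hm⟩ := Submodule.mem_sup.mp (htop ▸ Submodule.mem_top (x := m))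
  have hfr : ∀ x ∈ R, Z x - θ • x ∈ R := by
    intro x hx
    have : Submodule.map (Z - θ • (1 : Module.End F V)) R ≤ R := by
      rw [hR, Submodule.map_iSup]
      apply iSup_le
      intro l
      refine le_trans ?_ (le_iSup _ l)
      intro z hz
      obtain ⟨x', hx', rfl⟩ := Submodule.mem_map.mp hz
      rw [Module.End.mem_eigenspace_iff] at hx' ⊢
      simp only [LinearMap.sub_apply, LinearMap.smul_apply, Module.End.one_apply]
      have h2 : Z (Z x') = l.val • (l.val • x') := by rw [hx', map_smul, hx']
      simp only [map_sub, map_smul]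
      rw [h2, hx']
      module
    apply this
    exact Submodule.mem_map.mpr ⟨x, hx, by
      simp [LinearMap.sub_apply, LinearMap.smul_apply, Module.End.one_apply]⟩
  have hyR : y ∈ R := by
    have hyr : y = Z r - θ • r := by
      rw [hy, ← hm]
      rw [map_add]
      rw [Module.End.mem_eigenspace_iff] at hp
      rw [hp]
      module
    rw [hyr]
    exact hfr r hr
  have hdisj : Disjoint (Module.End.eigenspace Z θ) R := by
    have hind := Module.End.eigenspaces_iSupIndep Z
    refine Disjoint.mono_right ?_ (hind θ)
    rw [hR]
    apply iSup_le
    intro l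
    exact le_iSup₂ (f := fun (j : F) (_ : j ≠ θ) => Module.End.eigenspace Z j) l.val l.2
  have hy0 : y = 0 := by
    have h1 : y ∈ Module.End.eigenspace Z θ := Module.End.mem_eigenspace_iff.mpr hZy
    exact Submodule.disjoint_def.mp hdisj y h1 hyR
  rw [hy] at hy0
  linear_combination (norm := module) hy0

/-- Schur-type lemma: an operator commuting with all `T i` on an irreducible module
is a scalar. -/
theorem schur_scalar [IsAlgClosed F] [FiniteDimensional F V] [Nontrivial V]
    (T : Fin 4 → Module.End F V)
    (hsimple : ∀ W : Submodule F V, (∀ i, ∀ v ∈ W, T i v ∈ W) → W = ⊥ ∨ W = ⊤)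
    (g : Module.End F V) (hg : ∀ i, g * T i = T i * g) : ∃ c : F, g = c • 1 := by
  obtain ⟨c, hc⟩ := Module.End.exists_eigenvalue g
  refine ⟨c, ?_⟩
  have hW := hsimple (Module.End.eigenspace g c) ?_
  · rcases hW with h | h
    · exact absurd h hc
    · ext v
      have hv : v ∈ Module.End.eigenspace g c := h ▸ Submodule.mem_top
      rw [Module.End.mem_eigenspace_iff] at hv
      simpa using hv
  · intro i v hv
    rw [Module.End.mem_eigenspace_iff] at hv ⊢
    have := congrArg (fun f : Module.End F V => f v) (hg i)
    simp only [Module.End.mul_apply] at this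
    rw [this, hv, map_smul]

end Stmt16Aux


theorem stmt16 {F : Type*} [Field F] [IsAlgClosed F] {q : F}
    (hq : q ≠ 0) (hqru : ∀ m : ℕ, 1 ≤ m → q ^ m ≠ 1)
    {V : Type*} [AddCommGroup V] [Module F V] [FiniteDimensional F V]
    (M : HqMod F q V) (hirr : M.Irreducible) (hX : Diagonalizable M.X)
    (μ : F) (hμ : Module.End.HasEigenvalue M.X μ) :
    Module.finrank F (Module.End.eigenspace M.X μ) = 1 := by
  classical
  obtain ⟨hnt, hsimple⟩ := hirr
  haveI := hnt
  -- basic inverse facts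
  have hXXi : M.X * M.Xinv = 1 := by
    show M.t 3 * M.t 0 * (M.s 0 * M.s 3) = 1
    calc M.t 3 * M.t 0 * (M.s 0 * M.s 3) = M.t 3 * (M.t 0 * M.s 0) * M.s 3 := by noncomm_ring
      _ = 1 := by rw [M.ts 0, mul_one, M.ts 3]
  have hXiX : M.Xinv * M.X = 1 := by
    show M.s 0 * M.s 3 * (M.t 3 * M.t 0) = 1
    calc M.s 0 * M.s 3 * (M.t 3 * M.t 0) = M.s 0 * (M.s 3 * M.t 3) * M.t 0 := by noncomm_ring
      _ = 1 := by rw [M.st 3, mul_one, M.st 0]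
  -- the scalars κ i
  have hκex : ∀ i, ∃ c : F, M.t i + M.s i = c • (1 : Module.End F V) := by
    intro i
    exact Stmt16Aux.schur_scalar M.t hsimple (M.t i + M.s i) (fun j => M.central i j)
  choose κ hκ using hκex
  -- t1 * t2 = q⁻¹ • Xinv
  have hZτ : M.t 1 * M.t 2 = q⁻¹ • M.Xinv := by
    have h1 : M.s 0 * (M.t 0 * M.t 1 * M.t 2 * M.t 3) * M.s 3 = M.t 1 * M.t 2 := by
      calc M.s 0 * (M.t 0 * M.t 1 * M.t 2 * M.t 3) * M.s 3
          = (M.s 0 * M.t 0) * (M.t 1 * M.t 2) * (M.t 3 * M.s 3) := by noncomm_ring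
        _ = M.t 1 * M.t 2 := by rw [M.st 0, M.ts 3, one_mul, mul_one]
    rw [← h1, M.prodEq]
    show M.s 0 * (q⁻¹ • 1) * M.s 3 = q⁻¹ • (M.s 0 * M.s 3)
    rw [mul_smul_comm, mul_one, smul_mul_assoc]
  -- X v = θ v implies Xinv v = θ⁻¹ v
  have hXinveig : ∀ (θ : F), θ ≠ 0 → ∀ v : V, M.X v = θ • v → M.Xinv v = θ⁻¹ • v := by
    intro θ hθ v hv
    have h1 : M.Xinv (M.X v) = v := by
      have := congrArg (fun f : Module.End F V => f v) hXiX
      simpa using this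
    rw [hv, map_smul] at h1
    rw [eq_inv_smul_iff₀ hθ]
    exact h1
  -- τ-eigenspace translation
  have hτeig : ∀ (lam : F), lam ≠ 0 → ∀ v : V,
      ((M.t 1 * M.t 2) v = (q⁻¹ * lam⁻¹) • v ↔ M.X v = lam • v) := by
    intro lam hlam v
    constructor
    · intro h
      rw [hZτ] at h
      simp only [LinearMap.smul_apply] at h
      have h2 : M.Xinv v = lam⁻¹ • v := by
        have h3 : q⁻¹ • (M.Xinv v) = q⁻¹ • (lam⁻¹ • v) := by
          rw [h, mul_smul]
        exact smul_right_injective V (inv_ne_zero hq) h3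
      have h4 : M.X (M.Xinv v) = v := by
        have := congrArg (fun f : Module.End F V => f v) hXXi
        simpa using this
      rw [h2, map_smul] at h4
      rwa [inv_smul_eq_iff₀ hlam] at h4
    · intro h
      rw [hZτ]
      simp only [LinearMap.smul_apply]
      rw [hXinveig lam hlam v h, mul_smul]
  -- μ is nonzero
  have hμ0 : μ ≠ 0 := by
    intro h
    obtain ⟨v, hv⟩ := hμ.exists_hasEigenvector
    have hv1 : M.X v = 0 := by
      have := hv.apply_eq_smul
      rw [this, h, zero_smul]
    have : v = 0 := by
      have h2 : M.Xinv (M.X v) = v := by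
        have := congrArg (fun f : Module.End F V => f v) hXiX
        simpa using this
      rw [hv1, map_zero] at h2
      exact h2.symm
    exact hv.2 this
  -- powers of q are injective
  have hz1 : ∀ n : ℤ, q ^ n = 1 → n = 0 := by
    intro n hn
    rcases lt_trichotomy n 0 with h | h | h
    · exfalso
      have h2 : q ^ (-n) = 1 := by rw [zpow_neg, hn, inv_one]
      lift -n to ℕ using (by omega : (0:ℤ) ≤ -n) with m hm
      rw [zpow_natCast] at h2
      exact hqru m (by omega) h2
    · exact h
    · exfalso
      lift n to ℕ using h.le with m hm
      rw [zpow_natCast] at hn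
      exact hqru m (by exact_mod_cast h) hn
  have hqi : ∀ a b : ℤ, q ^ a = q ^ b → a = b := by
    intro a b hab
    have h1 : q ^ (a - b) = 1 := by
      rw [zpow_sub₀ hq, hab, div_self (zpow_ne_zero _ hq)]
    have := hz1 _ h1
    omega
  have hqm2 : q ^ (-2 : ℤ) = q⁻¹ * q⁻¹ := by
    rw [show (-2 : ℤ) = (-1) + (-1) by norm_num, zpow_add₀ hq, zpow_neg_one]
  -- the line of candidate eigenvalues
  set nu : ℤ → F := fun n => if Even n then q ^ (-n) * μ else q ^ (n - 1) * μ⁻¹ with hnu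
  have hnu0 : nu 0 = μ := by simp [hnu]
  have hnune : ∀ n, nu n ≠ 0 := by
    intro n
    rw [hnu]
    by_cases hpar : Even n
    · simp only [if_pos hpar]
      exact mul_ne_zero (zpow_ne_zero _ hq) hμ0
    · simp only [if_neg hpar]
      exact mul_ne_zero (zpow_ne_zero _ hq) (inv_ne_zero hμ0)
  have hstepE : ∀ n : ℤ, Even n → nu (n + 1) = (nu n)⁻¹ := by
    intro n hn
    have h1 : ¬Even (n + 1) := by
      rw [Int.even_add_one]
      simpa using hn
    rw [hnu]
    simp only [if_pos hn, if_neg h1]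
    rw [add_sub_cancel_right, mul_inv, zpow_neg, inv_inv]
  have hstepO : ∀ n : ℤ, ¬Even n → nu (n + 1) = q ^ (-2 : ℤ) * (nu n)⁻¹ := by
    intro n hn
    have h1 : Even (n + 1) := Int.even_add_one.mpr hn
    rw [hnu]
    simp only [if_pos h1, if_neg hn]
    rw [mul_inv, inv_inv, ← zpow_neg, ← mul_assoc, ← zpow_add₀ hq]
    congr 2
    omega
  have hinjpar : ∀ a b : ℤ, (Even a ↔ Even b) → nu a = nu b → a = b := by
    intro a b hab h
    rw [hnu] at h
    by_cases hpa : Even a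
    · have hpb : Even b := hab.mp hpa
      simp only [if_pos hpa, if_pos hpb] at h
      have := mul_right_cancel₀ hμ0 h
      have := hqi _ _ this
      omega
    · have hpb : ¬Even b := fun hb => hpa (hab.mpr hb)
      simp only [if_neg hpa, if_neg hpb] at h
      have := mul_right_cancel₀ (inv_ne_zero hμ0) h
      have := hqi _ _ this
      omega
  have hcross : ∀ a b : ℤ, Even a → ¬Even b → nu a = nu b → μ * μ = q ^ (a + b - 1) := by
    intro a b hpa hpb h
    rw [hnu] at h
    simp only [if_pos hpa, if_neg hpb] at h
    calc μ * μ = (q ^ a * (q ^ (-a) * μ)) * μ := by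
          rw [← mul_assoc, ← zpow_add₀ hq]
          simp
      _ = (q ^ a * (q ^ (b - 1) * μ⁻¹)) * μ := by rw [h]
      _ = q ^ a * q ^ (b - 1) * (μ⁻¹ * μ) := by ring
      _ = q ^ (a + b - 1) := by
          rw [inv_mul_cancel₀ hμ0, mul_one, ← zpow_add₀ hq]
          congr 1
          omega
  -- start data
  obtain ⟨B, hBinj, p₀, hp₀B, hp₀ν, hstart⟩ :
      ∃ B : ℤ, (∀ a b : ℤ, B ≤ a → B ≤ b → nu a = nu b → a = b) ∧
        ∃ p₀ : ℤ, B ≤ p₀ ∧ nu p₀ = μ ∧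
          (∀ n : ℤ, B ≤ n →
            (∀ m : ℤ, B ≤ m → m < n → Module.End.eigenspace M.X (nu m) = ⊥) →
            (nu (n - 1) = nu n ∨ Module.End.eigenspace M.X (nu (n - 1)) = ⊥)) := by
    by_cases hfold : ∃ k : ℤ, μ * μ = q ^ (2 * k)
    · obtain ⟨m₀, hm₀⟩ := hfold
      have hrefl : ∀ n : ℤ, Even n → nu (2 * m₀ + 1 - n) = nu n := by
        intro n hn
        have hodd : ¬Even (2 * m₀ + 1 - n) := by
          rintro ⟨l, hl⟩
          obtain ⟨k, hk⟩ := hn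
          omega
        rw [hnu]
        simp only [if_neg hodd, if_pos hn]
        rw [show 2 * m₀ + 1 - n - 1 = (-n) + 2 * m₀ by ring, zpow_add₀ hq, ← hm₀,
          mul_assoc, mul_assoc, mul_inv_cancel₀ hμ0, mul_one]
      refine ⟨m₀ + 1, ?_, if 0 ≤ m₀ then 2 * m₀ + 1 else 0, ?_, ?_, ?_⟩
      · intro a b ha hb h
        rcases Int.even_or_odd a with hpa | hpa <;> rcases Int.even_or_odd b with hpb | hpb
        · exact hinjpar a b (iff_of_true hpa hpb) h
        · exfalso
          have h1 := hcross a b hpa (Int.not_even_iff_odd.mpr hpb) h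
          have h2 : q ^ (a + b - 1) = q ^ (2 * m₀) := by rw [← h1, hm₀]
          have := hqi _ _ h2
          omega
        · exfalso
          have h1 := hcross b a hpb (Int.not_even_iff_odd.mpr hpa) h.symm
          have h2 : q ^ (b + a - 1) = q ^ (2 * m₀) := by rw [← h1, hm₀]
          have := hqi _ _ h2
          omega
        · exact hinjpar a b
            (iff_of_false (Int.not_even_iff_odd.mpr hpa) (Int.not_even_iff_odd.mpr hpb)) h
      · split_ifs with h0 <;> omega
      · split_ifs with h0
        · have := hrefl 0 Even.zero
          rw [sub_zero] at this
          rw [this, hnu0]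
        · exact hnu0
      · intro n hn hmin
        rcases lt_or_eq_of_le hn with hlt | heq
        · exact Or.inr (hmin (n - 1) (by omega) (by omega))
        · left
          rcases Int.even_or_odd (m₀ + 1) with hp | hp
          · have h1 := hrefl (m₀ + 1) hp
            rw [show 2 * m₀ + 1 - (m₀ + 1) = m₀ by ring] at h1
            rw [← heq, show m₀ + 1 - 1 = m₀ by ring]
            exact h1
          · have hp' : Even m₀ := by
              obtain ⟨k, hk⟩ := hp
              exact ⟨k, by omega⟩
            have h1 := hrefl m₀ hp'
            rw [show 2 * m₀ + 1 - m₀ = m₀ + 1 by ring] at h1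
            rw [← heq, show m₀ + 1 - 1 = m₀ by ring]
            exact h1.symm
    · have hSfin := Module.End.finite_hasEigenvalue M.X
      have hDfin : Set.Finite {n : ℤ | Module.End.eigenspace M.X (nu n) ≠ ⊥} := by
        have h1 : {n : ℤ | Module.End.eigenspace M.X (nu n) ≠ ⊥} ⊆
            ({n : ℤ | Module.End.eigenspace M.X (nu n) ≠ ⊥} ∩ {n | Even n}) ∪
            ({n : ℤ | Module.End.eigenspace M.X (nu n) ≠ ⊥} ∩ {n | ¬Even n}) := by
          intro n hn
          by_cases h : Even n
          · exact Or.inl ⟨hn, h⟩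
          · exact Or.inr ⟨hn, h⟩
        refine Set.Finite.subset (Set.Finite.union ?_ ?_) h1
        · refine Set.Finite.of_finite_image (f := nu) (hSfin.subset ?_) ?_
          · rintro x ⟨n, ⟨hn1, _⟩, rfl⟩
            exact hn1
          · intro a ha b hb h
            exact hinjpar a b (iff_of_true ha.2 hb.2) h
        · refine Set.Finite.of_finite_image (f := nu) (hSfin.subset ?_) ?_
          · rintro x ⟨n, ⟨hn1, _⟩, rfl⟩
            exact hn1
          · intro a ha b hb h
            exact hinjpar a b (iff_of_false ha.2 hb.2) h
      obtain ⟨B, hB⟩ := hDfin.bddBelow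
      rw [mem_lowerBounds] at hB
      refine ⟨B, ?_, 0, ?_, hnu0, ?_⟩
      · intro a b ha hb h
        rcases Int.even_or_odd a with hpa | hpa <;> rcases Int.even_or_odd b with hpb | hpb
        · exact hinjpar a b (iff_of_true hpa hpb) h
        · exfalso
          apply hfold
          have h1 := hcross a b hpa (Int.not_even_iff_odd.mpr hpb) h
          obtain ⟨x, hx⟩ := hpa
          obtain ⟨y, hy⟩ := hpb
          exact ⟨x + y, by rw [h1]; congr 1; omega⟩
        · exfalso
          apply hfold
          have h1 := hcross b a hpb (Int.not_even_iff_odd.mpr hpa) h.symm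
          obtain ⟨x, hx⟩ := hpb
          obtain ⟨y, hy⟩ := hpa
          exact ⟨x + y, by rw [h1]; congr 1; omega⟩
        · exact hinjpar a b
            (iff_of_false (Int.not_even_iff_odd.mpr hpa) (Int.not_even_iff_odd.mpr hpb)) h
      · apply hB
        show Module.End.eigenspace M.X (nu 0) ≠ ⊥
        rw [hnu0]
        exact hμ
      · intro n hn hmin
        right
        by_cases h : B ≤ n - 1
        · exact hmin (n - 1) h (by omega)
        · by_contra hne
          have h2 : B ≤ n - 1 := hB (n - 1) hne
          omega
  -- least good position
  obtain ⟨n₀, ⟨hn₀B, hn₀E⟩, hn₀min⟩ :=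
    Int.exists_least_of_bdd
      (P := fun n => B ≤ n ∧ Module.End.eigenspace M.X (nu n) ≠ ⊥)
      ⟨B, fun z hz => hz.1⟩ ⟨p₀, hp₀B, by rw [hp₀ν]; exact hμ⟩
  have hstart' : nu (n₀ - 1) = nu n₀ ∨ Module.End.eigenspace M.X (nu (n₀ - 1)) = ⊥ := by
    apply hstart n₀ hn₀B
    intro m hm1 hm2
    by_contra h
    have := hn₀min m ⟨hm1, h⟩
    omega
  -- the chain of eigenvalues
  set r : ℕ → F := fun j => nu (n₀ + j) with hr
  have hr0E : Module.End.eigenspace M.X (r 0) ≠ ⊥ := by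
    rw [hr]
    simpa using hn₀E
  have hrne0 : ∀ j, r j ≠ 0 := fun j => hnune _
  have hrinj : ∀ j k : ℕ, r j = r k → j = k := by
    intro j k h
    rw [hr] at h
    have := hBinj (n₀ + j) (n₀ + k) (by omega) (by omega) h
    omega
  have hrstepE : ∀ j : ℕ, Even (n₀ + (j : ℤ)) → r (j + 1) = (r j)⁻¹ := by
    intro j hpar
    rw [hr]
    have h1 : n₀ + ((j : ℤ) + 1) = (n₀ + j) + 1 := by ring
    push_cast
    rw [h1, hstepE _ hpar]
  have hrstepO : ∀ j : ℕ, ¬Even (n₀ + (j : ℤ)) → r (j + 1) = q ^ (-2:ℤ) * (r j)⁻¹ := by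
    intro j hpar
    rw [hr]
    have h1 : n₀ + ((j : ℤ) + 1) = (n₀ + j) + 1 := by ring
    push_cast
    rw [h1, hstepO _ hpar]
  -- pair lemma instantiations
  have pairσ := Stmt16Aux.pair_main (M.t 3) (M.s 3) (M.t 0) (M.s 0) M.X
    (M.ts 3) (M.st 3) (M.ts 0) (M.st 0) (κ 3) (κ 0) (hκ 3) (hκ 0) rfl
  have pairτ := Stmt16Aux.pair_main (M.t 1) (M.s 1) (M.t 2) (M.s 2) (M.t 1 * M.t 2)
    (M.ts 1) (M.st 1) (M.ts 2) (M.st 2) (κ 1) (κ 2) (hκ 1) (hκ 2) rfl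
  -- chain scalars and operators
  set pα : ℕ → F := fun j => if Even (n₀ + (j : ℤ)) then Stmt16Aux.pairAlpha (κ 3) (κ 0) (r j)
    else Stmt16Aux.pairAlpha (κ 1) (κ 2) (q⁻¹ * (r j)⁻¹) with hpα
  set pκ : ℕ → F := fun j => if Even (n₀ + (j : ℤ)) then κ 3 else κ 1 with hpκ
  set T : ℕ → Module.End F V := fun j => if Even (n₀ + (j : ℤ)) then M.t 3 else M.t 1 with hT
  set Cop : ℕ → Module.End F V := fun j => T j - pα j • 1 with hCop
  -- the two conditions at each link
  have hcond : ∀ j : ℕ, (Even (n₀ + (j : ℤ)) → r j * r j ≠ 1) ∧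
      (¬Even (n₀ + (j : ℤ)) → (q⁻¹ * (r j)⁻¹) * (q⁻¹ * (r j)⁻¹) ≠ 1) := by
    intro j
    constructor
    · intro hpar h1
      have h2 : (r j)⁻¹ = r j := inv_eq_of_mul_eq_one_right h1
      have h3 : r (j + 1) = r j := by rw [hrstepE j hpar, h2]
      have := hrinj _ _ h3
      omega
    · intro hpar h1
      have h3 : r (j + 1) = r j := by
        rw [hrstepO j hpar, hqm2]
        have hrj := hrne0 j
        field_simp
        field_simp at h1
        linear_combination h1
      have := hrinj _ _ h3
      omega
  -- main link facts
  have linkfacts : ∀ j : ℕ, ∀ v : V, M.X v = r j • v →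
      (M.X (Cop j v) = r (j + 1) • (Cop j v)) ∧
      (T j (Cop j v) = (pκ j - pα j) • (Cop j v)
        + (pκ j * pα j - 1 - pα j * pα j) • v) := by
    intro j v hv
    by_cases hpar : Even (n₀ + (j : ℤ))
    · -- σ-link
      have hcop : Cop j v = M.t 3 v - Stmt16Aux.pairAlpha (κ 3) (κ 0) (r j) • v := by
        simp only [hCop, hT, hpα, if_pos hpar]
        simp [LinearMap.sub_apply, LinearMap.smul_apply, Module.End.one_apply]
      have hθ2 := (hcond j).1 hpar
      have hp := pairσ (r j) (hrne0 j) hθ2 v hv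
      constructor
      · rw [hcop, hrstepE j hpar]
        exact hp.1
      · simp only [hT, hpκ, hpα, if_pos hpar]
        rw [hcop]
        exact hp.2
    · -- τ-link
      have hcop : Cop j v = M.t 1 v - Stmt16Aux.pairAlpha (κ 1) (κ 2) (q⁻¹ * (r j)⁻¹) • v := by
        simp only [hCop, hT, hpα, if_neg hpar]
        simp [LinearMap.sub_apply, LinearMap.smul_apply, Module.End.one_apply]
      have hζ0 : q⁻¹ * (r j)⁻¹ ≠ 0 := mul_ne_zero (inv_ne_zero hq) (inv_ne_zero (hrne0 j))
      have hζ2 := (hcond j).2 hpar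
      have hZv : (M.t 1 * M.t 2) v = (q⁻¹ * (r j)⁻¹) • v := (hτeig (r j) (hrne0 j) v).mpr hv
      have hp := pairτ (q⁻¹ * (r j)⁻¹) hζ0 hζ2 v hZv
      constructor
      · rw [hcop]
        apply (hτeig (r (j+1)) (hrne0 (j+1)) _).mp
        have hkey : q⁻¹ * (r (j+1))⁻¹ = (q⁻¹ * (r j)⁻¹)⁻¹ := by
          rw [hrstepO j hpar, hqm2]
          have h1 := hrne0 j
          field_simp
        rw [hkey]
        exact hp.1
      · simp only [hT, hpκ, hpα, if_neg hpar]
        rw [hcop]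
        exact hp.2
  -- start block
  set Tb : Module.End F V := if Even (n₀ - 1) then M.t 3 else M.t 1 with hTb
  have hr0nu : r 0 = nu n₀ := by simp [hr]
  have hTbmem : ∀ v : V, M.X v = r 0 • v → M.X (Tb v) = r 0 • (Tb v) := by
    intro v hv
    have hn₀eq : n₀ - 1 + 1 = n₀ := by ring
    rcases hstart' with hfoldlink | hbot
    · -- fold case
      by_cases hpar : Even (n₀ - 1)
      · -- σ-fold
        have hTb3 : Tb = M.t 3 := by rw [hTb, if_pos hpar]
        have h1 : nu n₀ = (nu (n₀ - 1))⁻¹ := by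
          have := hstepE (n₀ - 1) hpar
          rwa [hn₀eq] at this
        have hr00 : r 0 * r 0 = 1 := by
          have h2 : nu n₀ = (nu n₀)⁻¹ := by rw [hfoldlink] at h1; exact h1
          have h3 := congrArg (fun y => nu n₀ * y) h2
          rw [mul_inv_cancel₀ (hnune n₀)] at h3
          rw [hr0nu]
          exact h3
        have hkl := Stmt16Aux.pair_kl (M.t 3) (M.s 3) (M.t 0) (M.s 0)
          (M.ts 3) (M.st 3) (M.ts 0) (M.st 0) (κ 3) (κ 0) (hκ 3) (hκ 0)
          (r 0) (r 0) hr00 v (by exact hv)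
        have hkl' : M.X (M.X (M.t 3 v)) = (r 0 + r 0) • M.X (M.t 3 v) - M.t 3 v := hkl
        have hsq : M.X (M.X (M.t 3 v)) - (2 * r 0) • M.X (M.t 3 v)
            + (r 0 * r 0) • (M.t 3 v) = 0 := by
          rw [hr00, one_smul]
          linear_combination (norm := module) hkl'
        have := Stmt16Aux.kersq M.X hX (r 0) (M.t 3 v) hsq
        rw [hTb3]
        exact this
      · -- τ-fold
        have hTb1 : Tb = M.t 1 := by rw [hTb, if_neg hpar]
        have h1 : nu n₀ = q ^ (-2 : ℤ) * (nu (n₀ - 1))⁻¹ := by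
          have := hstepO (n₀ - 1) hpar
          rwa [hn₀eq] at this
        have hζζ : (q⁻¹ * (r 0)⁻¹) * (q⁻¹ * (r 0)⁻¹) = 1 := by
          have h2 : nu n₀ = q ^ (-2 : ℤ) * (nu n₀)⁻¹ := by rw [hfoldlink] at h1; exact h1
          rw [hqm2] at h2
          have hne := hnune n₀
          rw [hr0nu]
          field_simp
          field_simp at h2
          linear_combination -h2
        have hZv : (M.t 1 * M.t 2) v = (q⁻¹ * (r 0)⁻¹) • v :=
          (hτeig (r 0) (hrne0 0) v).mpr hv
        have hkl := Stmt16Aux.pair_kl (M.t 1) (M.s 1) (M.t 2) (M.s 2)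
          (M.ts 1) (M.st 1) (M.ts 2) (M.st 2) (κ 1) (κ 2) (hκ 1) (hκ 2)
          (q⁻¹ * (r 0)⁻¹) (q⁻¹ * (r 0)⁻¹) hζζ v hZv
        have hdiagτ : (⨆ lam : F, Module.End.eigenspace (M.t 1 * M.t 2) lam) = ⊤ := by
          rw [← top_le_iff]
          have hXdiag : (⨆ lam : F, Module.End.eigenspace M.X lam) = ⊤ := hX
          rw [← hXdiag]
          apply iSup_le
          intro lam
          by_cases hlam : lam = 0
          · subst hlam
            intro x hx
            rw [Module.End.mem_eigenspace_iff, zero_smul] at hx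
            have hx0 : x = 0 := by
              have h2 : M.Xinv (M.X x) = x := by
                have := congrArg (fun f : Module.End F V => f x) hXiX
                simpa using this
              rw [hx, map_zero] at h2
              exact h2.symm
            rw [hx0]
            exact Submodule.zero_mem _
          · refine le_trans ?_ (le_iSup _ (q⁻¹ * lam⁻¹))
            intro x hx
            rw [Module.End.mem_eigenspace_iff] at hx ⊢
            exact (hτeig lam hlam x).mpr hx
        have hsq : (M.t 1 * M.t 2) ((M.t 1 * M.t 2) (M.t 1 v))
            - (2 * (q⁻¹ * (r 0)⁻¹)) • (M.t 1 * M.t 2) (M.t 1 v)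
            + ((q⁻¹ * (r 0)⁻¹) * (q⁻¹ * (r 0)⁻¹)) • (M.t 1 v) = 0 := by
          rw [hζζ, one_smul]
          linear_combination (norm := module) hkl
        have h3 := Stmt16Aux.kersq (M.t 1 * M.t 2) hdiagτ (q⁻¹ * (r 0)⁻¹) (M.t 1 v) hsq
        rw [hTb1]
        exact (hτeig (r 0) (hrne0 0) (M.t 1 v)).mp h3
    · -- boundary case
      by_cases hpar : Even (n₀ - 1)
      · -- σ-boundary
        have hTb3 : Tb = M.t 3 := by rw [hTb, if_pos hpar]
        have h1 : nu n₀ = (nu (n₀ - 1))⁻¹ := by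
          have := hstepE (n₀ - 1) hpar
          rwa [hn₀eq] at this
        have hπ : nu (n₀ - 1) = (r 0)⁻¹ := by
          rw [hr0nu, h1, inv_inv]
        have hkl := Stmt16Aux.pair_kl (M.t 3) (M.s 3) (M.t 0) (M.s 0)
          (M.ts 3) (M.st 3) (M.ts 0) (M.st 0) (κ 3) (κ 0) (hκ 3) (hκ 0)
          (r 0) ((r 0)⁻¹) (mul_inv_cancel₀ (hrne0 0)) v (by exact hv)
        have hkl' : M.X (M.X (M.t 3 v)) = (r 0 + (r 0)⁻¹) • M.X (M.t 3 v) - M.t 3 v := hkl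
        have hy : M.X (M.X (M.t 3 v) - r 0 • (M.t 3 v))
            = (r 0)⁻¹ • (M.X (M.t 3 v) - r 0 • (M.t 3 v)) := by
          rw [map_sub, map_smul, hkl']
          have h2 := hrne0 0
          match_scalars <;> (field_simp; try ring)
        have hymem : M.X (M.t 3 v) - r 0 • (M.t 3 v) ∈
            Module.End.eigenspace M.X (nu (n₀ - 1)) := by
          rw [hπ]
          exact Module.End.mem_eigenspace_iff.mpr hy
        rw [hbot] at hymem
        have hy0 : M.X (M.t 3 v) - r 0 • (M.t 3 v) = 0 := by simpa using hymem
        rw [hTb3]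
        linear_combination (norm := module) hy0
      · -- τ-boundary
        have hTb1 : Tb = M.t 1 := by rw [hTb, if_neg hpar]
        have h1 : nu n₀ = q ^ (-2 : ℤ) * (nu (n₀ - 1))⁻¹ := by
          have := hstepO (n₀ - 1) hpar
          rwa [hn₀eq] at this
        have hπ : nu (n₀ - 1) = q⁻¹ * q⁻¹ * (r 0)⁻¹ := by
          rw [hqm2] at h1
          have h2 := hnune (n₀ - 1)
          rw [hr0nu, h1]
          field_simp
          try ring
        have hπne : nu (n₀ - 1) ≠ 0 := hnune _
        have hζζ' : (q⁻¹ * (r 0)⁻¹) * (q * r 0) = 1 := by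
          rw [← mul_inv]
          exact inv_mul_cancel₀ (mul_ne_zero hq (hrne0 0))
        have hZv : (M.t 1 * M.t 2) v = (q⁻¹ * (r 0)⁻¹) • v :=
          (hτeig (r 0) (hrne0 0) v).mpr hv
        have hkl := Stmt16Aux.pair_kl (M.t 1) (M.s 1) (M.t 2) (M.s 2)
          (M.ts 1) (M.st 1) (M.ts 2) (M.st 2) (κ 1) (κ 2) (hκ 1) (hκ 2)
          (q⁻¹ * (r 0)⁻¹) (q * r 0) hζζ' v hZv
        have hy : (M.t 1 * M.t 2) ((M.t 1 * M.t 2) (M.t 1 v) - (q⁻¹ * (r 0)⁻¹) • (M.t 1 v))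
            = (q * r 0) • ((M.t 1 * M.t 2) (M.t 1 v) - (q⁻¹ * (r 0)⁻¹) • (M.t 1 v)) := by
          rw [map_sub, map_smul, hkl]
          have h2 := hrne0 0
          match_scalars <;> (field_simp; try ring)
        have hymem : (M.t 1 * M.t 2) (M.t 1 v) - (q⁻¹ * (r 0)⁻¹) • (M.t 1 v) ∈
            Module.End.eigenspace M.X (nu (n₀ - 1)) := by
          rw [Module.End.mem_eigenspace_iff]
          apply (hτeig (nu (n₀ - 1)) hπne _).mp
          have hsc : q⁻¹ * (nu (n₀ - 1))⁻¹ = q * r 0 := by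
            rw [hπ]
            have h2 := hrne0 0
            field_simp
          rw [hsc]
          exact hy
        rw [hbot] at hymem
        have hy0 : (M.t 1 * M.t 2) (M.t 1 v) - (q⁻¹ * (r 0)⁻¹) • (M.t 1 v) = 0 := by
          simpa using hymem
        have h3 : (M.t 1 * M.t 2) (M.t 1 v) = (q⁻¹ * (r 0)⁻¹) • (M.t 1 v) := by
          linear_combination (norm := module) hy0
        rw [hTb1]
        exact (hτeig (r 0) (hrne0 0) (M.t 1 v)).mp h3
  -- eigenvector for the start
  have hrmem : ∀ x ∈ Module.End.eigenspace M.X (r 0), Tb x ∈ Module.End.eigenspace M.X (r 0) := by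
    intro x hx
    rw [Module.End.mem_eigenspace_iff] at hx ⊢
    exact hTbmem x hx
  haveI : Nontrivial (Module.End.eigenspace M.X (r 0)) :=
    Submodule.nontrivial_iff_ne_bot.mpr hr0E
  obtain ⟨c₀, hc₀⟩ := Module.End.exists_eigenvalue (Tb.restrict hrmem)
  obtain ⟨v₀', hv₀'⟩ := hc₀.exists_hasEigenvector
  set v₀ : V := (v₀' : V) with hv₀def
  have hv₀E : v₀ ∈ Module.End.eigenspace M.X (r 0) := v₀'.2
  have hv₀ne : v₀ ≠ 0 := by
    simpa [hv₀def, Submodule.coe_eq_zero] using hv₀'.2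
  have hTbv₀ : Tb v₀ = c₀ • v₀ := by
    have h1 := hv₀'.apply_eq_smul
    have h2 := congrArg (Subtype.val) h1
    simpa [LinearMap.restrict_coe_apply, hv₀def] using h2
  -- identities for t0 and t2
  have hID0 : ∀ (θ : F) (v : V), M.X v = θ • v →
      M.t 0 v = (θ * κ 3) • v - θ • (M.t 3 v) := by
    intro θ v hv
    have h1 : M.s 3 * M.X = M.t 0 := by
      show M.s 3 * (M.t 3 * M.t 0) = M.t 0
      rw [← mul_assoc, M.st 3, one_mul]
    have h2 : M.t 0 v = M.s 3 (M.X v) := by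
      rw [← h1]; simp [Module.End.mul_apply]
    have h3 : M.s 3 = κ 3 • (1 : Module.End F V) - M.t 3 := by
      have := hκ 3
      linear_combination (norm := module) this
    rw [h2, hv, map_smul, h3]
    simp only [LinearMap.sub_apply, LinearMap.smul_apply, Module.End.one_apply]
    module
  have hID2 : ∀ (θ : F), θ ≠ 0 → ∀ (v : V), M.X v = θ • v →
      M.t 2 v = (q⁻¹ * θ⁻¹ * κ 1) • v - (q⁻¹ * θ⁻¹) • (M.t 1 v) := by
    intro θ hθ v hv
    have h1 : M.s 1 * (M.t 1 * M.t 2) = M.t 2 := by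
      rw [← mul_assoc, M.st 1, one_mul]
    have h2 := congrArg (fun f : Module.End F V => f v) h1
    have h4 := (hτeig θ hθ v).mpr hv
    simp only [Module.End.mul_apply] at h2 h4
    have h3 : M.s 1 = κ 1 • (1 : Module.End F V) - M.t 1 := by
      have := hκ 1
      linear_combination (norm := module) this
    rw [← h2, h4, map_smul, h3]
    simp only [LinearMap.sub_apply, LinearMap.smul_apply, Module.End.one_apply]
    module
  -- the chain of submodules
  set W : ℕ → Submodule F V := fun j =>
    Nat.rec (Submodule.span F {v₀}) (fun j' Wj => Submodule.map (Cop j') Wj) j with hW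
  have hW0 : W 0 = Submodule.span F {v₀} := rfl
  have hWs : ∀ j, W (j + 1) = Submodule.map (Cop j) (W j) := fun j => rfl
  have hWE : ∀ j, W j ≤ Module.End.eigenspace M.X (r j) := by
    intro j
    induction j with
    | zero =>
      rw [hW0, Submodule.span_le]
      intro x hx
      rw [Set.mem_singleton_iff] at hx
      rw [hx]
      exact hv₀E
    | succ j ih =>
      rw [hWs]
      intro z hz
      obtain ⟨x, hx, rfl⟩ := Submodule.mem_map.mp hz
      rw [Module.End.mem_eigenspace_iff]
      exact (linkfacts j x (Module.End.mem_eigenspace_iff.mp (ih hx))).1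
  set Wtot : Submodule F V := ⨆ j, W j with hWtot
  have hWle : ∀ j, W j ≤ Wtot := fun j => le_iSup W j
  -- invariance under t3 and t1
  have hWmem1 : ∀ j : ℕ, ∀ v ∈ W j, Cop j v ∈ Wtot := by
    intro j v hv
    apply hWle (j + 1)
    rw [hWs]
    exact Submodule.mem_map_of_mem hv
  have hv₀W : v₀ ∈ Wtot := by
    apply hWle 0
    rw [hW0]
    exact Submodule.mem_span_singleton_self v₀
  have hback : ∀ j' : ℕ, ∀ x ∈ W j', T j' (Cop j' x) ∈ Wtot := by
    intro j' x hx
    have hx' : M.X x = r j' • x := Module.End.mem_eigenspace_iff.mp (hWE j' hx)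
    rw [(linkfacts j' x hx').2]
    exact Submodule.add_mem _ (Submodule.smul_mem _ _ (hWmem1 j' x hx))
      (Submodule.smul_mem _ _ (hWle j' hx))
  have hfwd : ∀ j : ℕ, ∀ v ∈ W j, T j v ∈ Wtot := by
    intro j v hv
    have h1 : T j v = Cop j v + pα j • v := by
      rw [hCop]
      simp only [LinearMap.sub_apply, LinearMap.smul_apply, Module.End.one_apply]
      module
    rw [h1]
    exact Submodule.add_mem _ (hWmem1 j v hv) (Submodule.smul_mem _ _ (hWle j hv))
  have hinv31 : ∀ j : ℕ, ∀ v ∈ W j, M.t 3 v ∈ Wtot ∧ M.t 1 v ∈ Wtot := by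
    intro j v hv
    by_cases hpar : Even (n₀ + (j : ℤ))
    · -- t3 is forward, t1 is backward
      have hTj : T j = M.t 3 := by simp only [hT]; rw [if_pos hpar]
      refine ⟨by rw [← hTj]; exact hfwd j v hv, ?_⟩
      cases j with
      | zero =>
        have hparb : ¬ Even (n₀ - 1) := by
          rw [Int.even_sub_one]
          simpa using hpar
        have hTb1 : Tb = M.t 1 := by rw [hTb, if_neg hparb]
        rw [hW0] at hv
        obtain ⟨k, hk⟩ := Submodule.mem_span_singleton.mp hv
        rw [← hk, map_smul, ← hTb1, hTbv₀]
        exact Submodule.smul_mem _ _ (Submodule.smul_mem _ _ hv₀W)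
      | succ j' =>
        have hpar' : ¬ Even (n₀ + (j' : ℤ)) := by
          intro h
          have h2 : (n₀ + ((j' + 1 : ℕ) : ℤ)) = (n₀ + j') + 1 := by push_cast; ring
          rw [h2, Int.even_add_one] at hpar
          exact hpar h
        have hTj' : T j' = M.t 1 := by simp only [hT]; rw [if_neg hpar']
        rw [hWs] at hv
        obtain ⟨x, hx, rfl⟩ := Submodule.mem_map.mp hv
        rw [← hTj']
        exact hback j' x hx
    · -- t1 is forward, t3 is backward
      have hTj : T j = M.t 1 := by simp only [hT]; rw [if_neg hpar]
      refine ⟨?_, by rw [← hTj]; exact hfwd j v hv⟩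
      cases j with
      | zero =>
        have hparb : Even (n₀ - 1) := by
          rw [Int.even_sub_one]
          simpa using hpar
        have hTb3 : Tb = M.t 3 := by rw [hTb, if_pos hparb]
        rw [hW0] at hv
        obtain ⟨k, hk⟩ := Submodule.mem_span_singleton.mp hv
        rw [← hk, map_smul, ← hTb3, hTbv₀]
        exact Submodule.smul_mem _ _ (Submodule.smul_mem _ _ hv₀W)
      | succ j' =>
        have hpar' : Even (n₀ + (j' : ℤ)) := by
          by_contra h
          have h2 : (n₀ + ((j' + 1 : ℕ) : ℤ)) = (n₀ + j') + 1 := by push_cast; ring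
          rw [h2, Int.even_add_one] at hpar
          exact hpar h
        have hTj' : T j' = M.t 3 := by simp only [hT]; rw [if_pos hpar']
        rw [hWs] at hv
        obtain ⟨x, hx, rfl⟩ := Submodule.mem_map.mp hv
        rw [← hTj']
        exact hback j' x hx
  -- invariance under all
  have hinvall : ∀ i : Fin 4, ∀ v ∈ Wtot, M.t i v ∈ Wtot := by
    have key : ∀ j : ℕ, ∀ v ∈ W j, ∀ i : Fin 4, M.t i v ∈ Wtot := by
      intro j v hv i
      have hv' : M.X v = r j • v := Module.End.mem_eigenspace_iff.mp (hWE j hv)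
      have h31 := hinv31 j v hv
      fin_cases i
      · -- t 0
        show M.t 0 v ∈ Wtot
        rw [hID0 (r j) v hv']
        exact Submodule.sub_mem _ (Submodule.smul_mem _ _ (hWle j hv))
          (Submodule.smul_mem _ _ h31.1)
      · exact h31.2
      · -- t 2
        show M.t 2 v ∈ Wtot
        rw [hID2 (r j) (hrne0 j) v hv']
        exact Submodule.sub_mem _ (Submodule.smul_mem _ _ (hWle j hv))
          (Submodule.smul_mem _ _ h31.2)
      · exact h31.1
    intro i v hv
    have hmap : Submodule.map (M.t i) Wtot ≤ Wtot := by
      rw [hWtot, Submodule.map_iSup]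
      apply iSup_le
      intro j
      intro z hz
      obtain ⟨x, hx, rfl⟩ := Submodule.mem_map.mp hz
      exact key j x hx i
    exact hmap (Submodule.mem_map_of_mem hv)
  -- Wtot is everything
  have hWtop : Wtot = ⊤ := by
    rcases hsimple Wtot hinvall with h | h
    · exfalso
      have : v₀ ∈ Wtot := hWle 0 (by
        rw [hW0]
        exact Submodule.mem_span_singleton_self v₀)
      rw [h] at this
      exact hv₀ne (by simpa using this)
    · exact h
  -- finrank bounds
  have hfr : ∀ j, Module.finrank F (W j) ≤ 1 := by
    intro j
    induction j with
    | zero =>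
      rw [hW0]
      exact le_of_eq (finrank_span_singleton hv₀ne)
    | succ j ih =>
      rw [hWs]
      exact le_trans (Submodule.finrank_map_le (Cop j) (W j)) ih
  -- position of μ
  have hn₀p₀ : n₀ ≤ p₀ := hn₀min p₀ ⟨hp₀B, by rw [hp₀ν]; exact hμ⟩
  set j₀ : ℕ := (p₀ - n₀).toNat with hj₀
  have hrj₀ : r j₀ = μ := by
    have h1 : n₀ + ((j₀ : ℕ) : ℤ) = p₀ := by
      rw [hj₀, Int.toNat_of_nonneg (by omega : (0:ℤ) ≤ p₀ - n₀)]
      ring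
    calc r j₀ = nu (n₀ + (j₀ : ℤ)) := by rw [hr]
      _ = nu p₀ := by rw [h1]
      _ = μ := hp₀ν
  -- E μ = W j₀
  have hEW : Module.End.eigenspace M.X μ = W j₀ := by
    apply le_antisymm
    · intro x hx
      have hxtot : x ∈ Wtot := by rw [hWtop]; exact Submodule.mem_top
      set Rst : Submodule F V := ⨆ l : {l : F // l ≠ μ}, Module.End.eigenspace M.X l.val
        with hRst
      have hsub : Wtot ≤ W j₀ ⊔ Rst := by
        rw [hWtot]
        apply iSup_le
        intro j
        by_cases hj : r j = μ
        · have : j = j₀ := hrinj j j₀ (by rw [hj, hrj₀])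
          rw [this]
          exact le_sup_of_le_left le_rfl
        · refine le_sup_of_le_right (le_trans (hWE j) ?_)
          rw [hRst]
          exact le_iSup (fun l : {l : F // l ≠ μ} => Module.End.eigenspace M.X l.val) ⟨r j, hj⟩
      obtain ⟨y, hy, z, hz, hyz⟩ := Submodule.mem_sup.mp (hsub hxtot)
      have hzE : z ∈ Module.End.eigenspace M.X μ := by
        have hyE : y ∈ Module.End.eigenspace M.X μ := by
          have := hWE j₀ hy
          rwa [hrj₀] at this
        have : z = x - y := by rw [← hyz]; module
        rw [this]
        exact Submodule.sub_mem _ hx hyE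
      have hdisj : Disjoint (Module.End.eigenspace M.X μ) Rst := by
        have hind := Module.End.eigenspaces_iSupIndep M.X
        refine Disjoint.mono_right ?_ (hind μ)
        rw [hRst]
        apply iSup_le
        intro l
        exact le_iSup₂ (f := fun (j : F) (_ : j ≠ μ) => Module.End.eigenspace M.X j) l.val l.2
      have hz0 : z = 0 := Submodule.disjoint_def.mp hdisj z hzE hz
      rw [hz0, add_zero] at hyz
      rw [← hyz]
      exact hy
    · have := hWE j₀
      rwa [hrj₀] at this
  -- conclusion
  have h1 : Module.finrank F (Module.End.eigenspace M.X μ) ≤ 1 := by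
    rw [hEW]
    exact hfr j₀
  have h2 : 0 < Module.finrank F (Module.End.eigenspace M.X μ) := by
    obtain ⟨v, hv⟩ := hμ.exists_hasEigenvector
    have hle : Submodule.span F {v} ≤ Module.End.eigenspace M.X μ := by
      rw [Submodule.span_le]
      intro x hx
      rw [Set.mem_singleton_iff] at hx
      rw [hx]
      exact hv.1
    have := Submodule.finrank_mono hle
    rw [finrank_span_singleton hv.2] at this
    omega
  omega
end

section
/- Let V be an XD H_q-module and let μ, ν be distinct eigenvalues of X on V. (i) If μν = 1, then G_0·V_X(μ) = V_X(ν) and G_0·V_X(ν) = V_X(μ). (ii) If μν = q^{−2}, then G_2·V_X(μ) = V_X(ν) and G_2·V_X(ν) = V_X(μ). -/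
namespace HqModAux

open Module Submodule

variable {F : Type*} [Field F] {q : F} {V : Type*} [AddCommGroup V] [Module F V]

/-- diagonal scalar for the `t 3`-action on the `X`-eigenspace of `lam`. -/
noncomputable def tauS (α β lam : F) : F := (α - β * lam) / (lam⁻¹ - lam)

/-- diagonal scalar for the `t 1`-action on the `X`-eigenspace of `lam`. -/
noncomputable def thetaS (q γ δ lam : F) : F :=
  (q⁻¹ * γ - q⁻¹ * q⁻¹ * lam⁻¹ * δ) / (lam - q⁻¹ * q⁻¹ * lam⁻¹)

lemma X_mul_Xinv (M : HqMod F q V) : M.X * M.Xinv = 1 := by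
  show M.t 3 * M.t 0 * (M.s 0 * M.s 3) = 1
  rw [mul_assoc, ← mul_assoc (M.t 0), M.ts, one_mul, M.ts]

lemma Xinv_mul_X (M : HqMod F q V) : M.Xinv * M.X = 1 := by
  show M.s 0 * M.s 3 * (M.t 3 * M.t 0) = 1
  rw [mul_assoc, ← mul_assoc (M.s 3), M.st, one_mul, M.st]

lemma t1_mul_t2 (M : HqMod F q V) : M.t 1 * M.t 2 = q⁻¹ • M.Xinv := by
  have h : M.t 1 * M.t 2
      = (M.s 0 * M.t 0) * (M.t 1 * M.t 2) * (M.t 3 * M.s 3) := by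
    rw [M.st, M.ts, one_mul, mul_one]
  have h2 : (M.s 0 * M.t 0) * (M.t 1 * M.t 2) * (M.t 3 * M.s 3)
      = M.s 0 * (M.t 0 * M.t 1 * M.t 2 * M.t 3) * M.s 3 := by
    noncomm_ring
  rw [h, h2, M.prodEq, mul_smul_comm, mul_one, smul_mul_assoc]
  rfl

lemma t0_eq (M : HqMod F q V) : M.t 0 = M.s 3 * M.X := by
  show M.t 0 = M.s 3 * (M.t 3 * M.t 0)
  rw [← mul_assoc, M.st, one_mul]

lemma s0_eq (M : HqMod F q V) : M.s 0 = M.Xinv * M.t 3 := by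
  show M.s 0 = M.s 0 * M.s 3 * M.t 3
  rw [mul_assoc, M.st, mul_one]

lemma t2_eq (M : HqMod F q V) : M.t 2 = q⁻¹ • (M.s 1 * M.Xinv) := by
  have h : M.t 2 = M.s 1 * (M.t 1 * M.t 2) := by rw [← mul_assoc, M.st, one_mul]
  rw [h, t1_mul_t2, mul_smul_comm]

lemma s2_eq (M : HqMod F q V) (hq : q ≠ 0) : M.s 2 = q • (M.X * M.t 1) := by
  have h1 : M.t 2 * (q • (M.X * M.t 1)) = 1 := by
    rw [t2_eq, smul_mul_assoc, mul_smul_comm, smul_smul, inv_mul_cancel₀ hq, one_smul,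
      mul_assoc, ← mul_assoc M.Xinv, Xinv_mul_X, one_mul, M.st]
  calc M.s 2 = M.s 2 * (M.t 2 * (q • (M.X * M.t 1))) := by rw [h1, mul_one]
    _ = (M.s 2 * M.t 2) * (q • (M.X * M.t 1)) := by rw [mul_assoc]
    _ = q • (M.X * M.t 1) := by rw [M.st, one_mul]

lemma eigen_zero (M : HqMod F q V) : Module.End.eigenspace M.X 0 = ⊥ := by
  rw [eq_bot_iff]
  intro v hv
  rw [Module.End.mem_eigenspace_iff, zero_smul] at hv
  have : (M.Xinv * M.X) v = v := by rw [Xinv_mul_X]; rfl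
  rw [Submodule.mem_bot, ← this, Module.End.mul_apply, hv, map_zero]

end HqModAux
namespace HqModAux

open Module Submodule

/-- All standing context for the main argument. -/
structure Setup (F : Type*) [Field F] (q : F) (V : Type*) [AddCommGroup V] [Module F V] where
  M : HqMod F q V
  hq : q ≠ 0
  hqru : ∀ m : ℕ, 1 ≤ m → q ^ m ≠ 1
  hirr : M.Irreducible
  hX : Diagonalizable M.X
  α : F
  β : F
  γ : F
  δ : F
  hα : M.t 0 + M.s 0 = α • 1
  hδ : M.t 1 + M.s 1 = δ • 1
  hγ : M.t 2 + M.s 2 = γ • 1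
  hβ : M.t 3 + M.s 3 = β • 1

namespace Setup

variable {F : Type*} [Field F] {q : F} {V : Type*} [AddCommGroup V] [Module F V]
variable (S : Setup F q V)

lemma s3_eq : S.M.s 3 = S.β • 1 - S.M.t 3 := eq_sub_of_add_eq' S.hβ
lemma s0_eq' : S.M.s 0 = S.α • 1 - S.M.t 0 := eq_sub_of_add_eq' S.hα
lemma s1_eq : S.M.s 1 = S.δ • 1 - S.M.t 1 := eq_sub_of_add_eq' S.hδ
lemma s2_eq' : S.M.s 2 = S.γ • 1 - S.M.t 2 := eq_sub_of_add_eq' S.hγ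

lemma t3_sq : S.M.t 3 * S.M.t 3 = S.β • S.M.t 3 - 1 := by
  have h := S.M.ts 3
  rw [s3_eq] at h
  rw [mul_sub, mul_smul_comm, mul_one] at h
  linear_combination (norm := noncomm_ring) -h

lemma t1_sq : S.M.t 1 * S.M.t 1 = S.δ • S.M.t 1 - 1 := by
  have h := S.M.ts 1
  rw [s1_eq] at h
  rw [mul_sub, mul_smul_comm, mul_one] at h
  linear_combination (norm := noncomm_ring) -h

/-- key composition identity for `t 3` crossings. -/
lemma comp3 (a b : F) (hab : a + b = S.β) (w : V) :
    (S.M.t 3 - a • 1) ((S.M.t 3 - b • 1) w) = (a * b - 1) • w := by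
  have h3 : S.M.t 3 (S.M.t 3 w) = S.β • S.M.t 3 w - w := by
    have := congrArg (fun f : Module.End F V => f w) S.t3_sq
    simpa using this
  simp only [LinearMap.sub_apply, LinearMap.smul_apply, Module.End.one_apply, map_sub, map_smul]
  rw [h3, ← hab]
  module

/-- key composition identity for `t 1` crossings. -/
lemma comp1 (a b : F) (hab : a + b = S.δ) (w : V) :
    (S.M.t 1 - a • 1) ((S.M.t 1 - b • 1) w) = (a * b - 1) • w := by
  have h1 : S.M.t 1 (S.M.t 1 w) = S.δ • S.M.t 1 w - w := by
    have := congrArg (fun f : Module.End F V => f w) S.t1_sq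
    simpa using this
  simp only [LinearMap.sub_apply, LinearMap.smul_apply, Module.End.one_apply, map_sub, map_smul]
  rw [h1, ← hab]
  module

end Setup

end HqModAux
namespace HqModAux

namespace Setup

open Module Submodule

variable {F : Type*} [Field F] {q : F} {V : Type*} [AddCommGroup V] [Module F V]
variable (S : Setup F q V) {lam : F} {v : V}

lemma X_app (hv : v ∈ Module.End.eigenspace S.M.X lam) : S.M.X v = lam • v :=
  Module.End.mem_eigenspace_iff.1 hv

lemma Xinv_app (h0 : lam ≠ 0) (hv : v ∈ Module.End.eigenspace S.M.X lam) :
    S.M.Xinv v = lam⁻¹ • v := by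
  have h1 : S.M.Xinv (S.M.X v) = v := by
    rw [← Module.End.mul_apply, Xinv_mul_X]; rfl
  rw [X_app S hv, map_smul] at h1
  have h2 := congrArg (fun w => lam⁻¹ • w) h1
  rw [smul_smul, inv_mul_cancel₀ h0, one_smul] at h2
  exact h2

lemma t0_app (hv : v ∈ Module.End.eigenspace S.M.X lam) :
    S.M.t 0 v = (lam * S.β) • v - lam • S.M.t 3 v := by
  have h := congrArg (fun f : Module.End F V => f v) (t0_eq S.M)
  simp only [Module.End.mul_apply] at h
  rw [X_app S hv, map_smul, s3_eq] at h
  simp only [LinearMap.sub_apply, LinearMap.smul_apply, Module.End.one_apply] at h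
  rw [h, smul_sub, smul_smul]

lemma Xinv_t3_app (hv : v ∈ Module.End.eigenspace S.M.X lam) :
    S.M.Xinv (S.M.t 3 v) = lam • S.M.t 3 v + (S.α - S.β * lam) • v := by
  have h := congrArg (fun f : Module.End F V => f v) (s0_eq S.M)
  simp only [Module.End.mul_apply] at h
  -- h : s0 v = Xinv (t3 v)
  rw [s0_eq'] at h
  simp only [LinearMap.sub_apply, LinearMap.smul_apply, Module.End.one_apply] at h
  rw [t0_app S hv] at h
  rw [← h]
  module

lemma X_t3_app (h0 : lam ≠ 0) (hv : v ∈ Module.End.eigenspace S.M.X lam) :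
    S.M.X (S.M.t 3 v) = lam⁻¹ • S.M.t 3 v - (S.α - S.β * lam) • v := by
  have h1 : S.M.X (S.M.Xinv (S.M.t 3 v)) = S.M.t 3 v := by
    rw [← Module.End.mul_apply, X_mul_Xinv]; rfl
  rw [Xinv_t3_app S hv, map_add, map_smul, map_smul, X_app S hv] at h1
  -- h1 : lam • X (t3 v) + (α - β lam) • lam • v = t3 v
  have h2 : lam • S.M.X (S.M.t 3 v) = S.M.t 3 v - ((S.α - S.β * lam) * lam) • v := by
    have h2' := eq_sub_of_add_eq h1
    rwa [smul_smul] at h2'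
  have h3 := congrArg (fun w => lam⁻¹ • w) h2
  rw [smul_smul, inv_mul_cancel₀ h0, one_smul] at h3
  rw [h3, smul_sub, smul_smul]
  have e : lam⁻¹ * ((S.α - S.β * lam) * lam) = S.α - S.β * lam := by
    rw [mul_comm (S.α - S.β * lam) lam, ← mul_assoc, inv_mul_cancel₀ h0, one_mul]
  rw [e]

lemma X_t1_app (h0 : lam ≠ 0) (hv : v ∈ Module.End.eigenspace S.M.X lam) :
    S.M.X (S.M.t 1 v) = (q⁻¹ * q⁻¹ * lam⁻¹) • S.M.t 1 v
      + (q⁻¹ * S.γ - q⁻¹ * q⁻¹ * lam⁻¹ * S.δ) • v := by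
  have hXt1 : S.M.X * S.M.t 1 = q⁻¹ • S.M.s 2 := by
    rw [s2_eq S.M S.hq, smul_smul, inv_mul_cancel₀ S.hq, one_smul]
  have h := congrArg (fun f : Module.End F V => f v) hXt1
  simp only [Module.End.mul_apply, LinearMap.smul_apply] at h
  rw [s2_eq'] at h
  simp only [LinearMap.sub_apply, LinearMap.smul_apply, Module.End.one_apply] at h
  have ht2 : S.M.t 2 v = (q⁻¹ * lam⁻¹) • ((S.δ • v) - S.M.t 1 v) := by
    have h2 := congrArg (fun f : Module.End F V => f v) (t2_eq S.M)
    simp only [Module.End.mul_apply, LinearMap.smul_apply] at h2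
    rw [Xinv_app S h0 hv, map_smul, s1_eq] at h2
    simp only [LinearMap.sub_apply, LinearMap.smul_apply, Module.End.one_apply] at h2
    rw [h2, smul_smul]
  rw [ht2] at h
  rw [h]
  module

lemma t2_app (h0 : lam ≠ 0) (hv : v ∈ Module.End.eigenspace S.M.X lam) :
    S.M.t 2 v = (q⁻¹ * lam⁻¹ * S.δ) • v - (q⁻¹ * lam⁻¹) • S.M.t 1 v := by
  have h2 := congrArg (fun f : Module.End F V => f v) (t2_eq S.M)
  simp only [Module.End.mul_apply, LinearMap.smul_apply] at h2
  rw [Xinv_app S h0 hv, map_smul, s1_eq] at h2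
  simp only [LinearMap.sub_apply, LinearMap.smul_apply, Module.End.one_apply] at h2
  rw [h2]
  module

lemma G0_app (h0 : lam ≠ 0) (hv : v ∈ Module.End.eigenspace S.M.X lam) :
    S.M.G0 v = (lam⁻¹ - lam) • S.M.t 3 v - (S.α - S.β * lam) • v := by
  have hG : S.M.G0 v = S.M.t 0 v - S.M.X (S.M.s 3 v) := rfl
  rw [hG, s3_eq]
  simp only [LinearMap.sub_apply, LinearMap.smul_apply, Module.End.one_apply]
  rw [map_sub, map_smul, X_app S hv, X_t3_app S h0 hv, t0_app S hv]
  module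

lemma Xinv_t1_app (h0 : lam ≠ 0) (hv : v ∈ Module.End.eigenspace S.M.X lam) :
    S.M.Xinv (S.M.t 1 v) = (q * q * lam) • S.M.t 1 v
      - (q * q * (q⁻¹ * S.γ - q⁻¹ * q⁻¹ * lam⁻¹ * S.δ)) • v := by
  have h1 : S.M.Xinv (S.M.X (S.M.t 1 v)) = S.M.t 1 v := by
    rw [← Module.End.mul_apply, Xinv_mul_X]; rfl
  rw [X_t1_app S h0 hv, map_add, map_smul, map_smul, Xinv_app S h0 hv] at h1
  have h2 : (q⁻¹ * q⁻¹ * lam⁻¹) • S.M.Xinv (S.M.t 1 v)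
      = S.M.t 1 v - ((q⁻¹ * S.γ - q⁻¹ * q⁻¹ * lam⁻¹ * S.δ) * lam⁻¹) • v := by
    have h2' := eq_sub_of_add_eq h1
    rwa [smul_smul] at h2'
  have hqq : (q⁻¹ * q⁻¹ * lam⁻¹) ≠ 0 :=
    mul_ne_zero (mul_ne_zero (inv_ne_zero S.hq) (inv_ne_zero S.hq)) (inv_ne_zero h0)
  have h3 := congrArg (fun w => (q⁻¹ * q⁻¹ * lam⁻¹)⁻¹ • w) h2
  rw [smul_smul, inv_mul_cancel₀ hqq, one_smul] at h3
  have ea : (q⁻¹ * q⁻¹ * lam⁻¹)⁻¹ = q * q * lam := by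
    simp [mul_inv]; ring
  rw [h3, smul_sub, smul_smul, ea]
  have eb : q * q * lam * ((q⁻¹ * S.γ - q⁻¹ * q⁻¹ * lam⁻¹ * S.δ) * lam⁻¹)
      = q * q * (q⁻¹ * S.γ - q⁻¹ * q⁻¹ * lam⁻¹ * S.δ) := by
    rw [mul_comm (q⁻¹ * S.γ - q⁻¹ * q⁻¹ * lam⁻¹ * S.δ) lam⁻¹, ← mul_assoc,
      mul_assoc (q * q) lam lam⁻¹, mul_inv_cancel₀ h0, mul_one]
  rw [eb]

lemma G2_app (h0 : lam ≠ 0) (hv : v ∈ Module.End.eigenspace S.M.X lam) :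
    S.M.G2 v = (q * lam - q⁻¹ * lam⁻¹) • S.M.t 1 v
      - (S.γ - q⁻¹ * lam⁻¹ * S.δ) • v := by
  have hG : S.M.G2 = S.M.t 2 - (q⁻¹ • S.M.Xinv) * S.M.s 1 := by
    show S.M.t 2 - S.M.t 1 * S.M.t 2 * S.M.s 1 = _
    rw [t1_mul_t2]
  have h := congrArg (fun f : Module.End F V => f v) hG
  simp only [LinearMap.sub_apply, Module.End.mul_apply, LinearMap.smul_apply] at h
  rw [s1_eq] at h
  simp only [LinearMap.sub_apply, LinearMap.smul_apply, Module.End.one_apply] at h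
  rw [map_sub, map_smul, Xinv_app S h0 hv, Xinv_t1_app S h0 hv, t2_app S h0 hv] at h
  rw [h]
  have e1 : q * lam - q⁻¹ * lam⁻¹ = q⁻¹ * (q * q * lam) - q⁻¹ * lam⁻¹ := by
    field_simp [S.hq]
    try ring
  have key : q⁻¹ * (q * q * (q⁻¹ * S.γ - q⁻¹ * q⁻¹ * lam⁻¹ * S.δ))
      = S.γ - q⁻¹ * lam⁻¹ * S.δ := by
    calc q⁻¹ * (q * q * (q⁻¹ * S.γ - q⁻¹ * q⁻¹ * lam⁻¹ * S.δ))
        = (q⁻¹ * q) * (q * (q⁻¹ * S.γ - q⁻¹ * q⁻¹ * lam⁻¹ * S.δ)) := by ring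
      _ = q * (q⁻¹ * S.γ - q⁻¹ * q⁻¹ * lam⁻¹ * S.δ) := by
          rw [inv_mul_cancel₀ S.hq, one_mul]
      _ = (q * q⁻¹) * S.γ - (q * q⁻¹) * (q⁻¹ * lam⁻¹ * S.δ) := by ring
      _ = S.γ - q⁻¹ * lam⁻¹ * S.δ := by rw [mul_inv_cancel₀ S.hq, one_mul, one_mul]
  have e2 : S.γ - q⁻¹ * lam⁻¹ * S.δ
      = q⁻¹ * (q * q * (q⁻¹ * S.γ - q⁻¹ * q⁻¹ * lam⁻¹ * S.δ)) - q⁻¹ * S.δ * lam⁻¹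
        + q⁻¹ * lam⁻¹ * S.δ := by
    rw [key]; ring
  rw [e1, e2]
  module

end Setup

end HqModAux
namespace HqModAux

namespace Setup

open Module Submodule

variable {F : Type*} [Field F] {q : F} {V : Type*} [AddCommGroup V] [Module F V]
variable (S : Setup F q V) {lam : F} {v w : V}

lemma cross_mem {c d : F} (hcl : c ≠ lam) (hv : v ∈ Module.End.eigenspace S.M.X lam)
    (hw : S.M.X w = c • w + d • v) :
    w - (d / (lam - c)) • v ∈ Module.End.eigenspace S.M.X c := by
  rw [Module.End.mem_eigenspace_iff]
  have hne : lam - c ≠ 0 := sub_ne_zero.2 (fun h => hcl h.symm)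
  rw [map_sub, map_smul, hw, X_app S hv]
  match_scalars
  · ring
  · field_simp
    ring

lemma lam_sq_of_inv_eq (h0 : lam ≠ 0) (h : lam⁻¹ = lam) : lam * lam = 1 := by
  nth_rewrite 1 [← h]
  exact inv_mul_cancel₀ h0

lemma qsq_of_eq (hq0 : q ≠ 0) (h0 : lam ≠ 0) (h : lam = q⁻¹ * q⁻¹ * lam⁻¹) :
    q * q * (lam * lam) = 1 := by
  have h3 : q * q * lam * (q⁻¹ * q⁻¹ * lam⁻¹) = 1 := by field_simp
  calc q * q * (lam * lam) = q * q * lam * lam := by ring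
    _ = q * q * lam * (q⁻¹ * q⁻¹ * lam⁻¹) := by rw [← h]
    _ = 1 := h3

/-- `t 3` crossing: from the `lam`-eigenspace to the `lam⁻¹`-eigenspace. -/
lemma t3_cross (h0 : lam ≠ 0) (h1 : lam * lam ≠ 1)
    (hv : v ∈ Module.End.eigenspace S.M.X lam) :
    S.M.t 3 v - tauS S.α S.β lam • v ∈ Module.End.eigenspace S.M.X lam⁻¹ := by
  have hcl : lam⁻¹ ≠ lam := fun h => h1 (lam_sq_of_inv_eq h0 h)
  have hw : S.M.X (S.M.t 3 v) = lam⁻¹ • S.M.t 3 v + (-(S.α - S.β * lam)) • v := by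
    rw [X_t3_app S h0 hv]; module
  have hm := cross_mem S hcl hv hw
  have e : -(S.α - S.β * lam) / (lam - lam⁻¹) = tauS S.α S.β lam := by
    rw [tauS, ← neg_sub lam⁻¹ lam, div_neg, neg_div, neg_neg]
  rwa [e] at hm

/-- `t 1` crossing: from the `lam`-eigenspace to the `q⁻² lam⁻¹`-eigenspace. -/
lemma t1_cross (h0 : lam ≠ 0) (h1 : q * q * (lam * lam) ≠ 1)
    (hv : v ∈ Module.End.eigenspace S.M.X lam) :
    S.M.t 1 v - thetaS q S.γ S.δ lam • v
      ∈ Module.End.eigenspace S.M.X (q⁻¹ * q⁻¹ * lam⁻¹) := by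
  have hcl : q⁻¹ * q⁻¹ * lam⁻¹ ≠ lam := fun h => h1 (qsq_of_eq S.hq h0 h.symm)
  have hw := X_t1_app S h0 hv
  exact cross_mem S hcl hv hw

lemma tau_add (h0 : lam ≠ 0) (h1 : lam * lam ≠ 1) :
    tauS S.α S.β lam + tauS S.α S.β lam⁻¹ = S.β := by
  have hne : lam⁻¹ - lam ≠ 0 := sub_ne_zero.2 (fun h => h1 (lam_sq_of_inv_eq h0 h))
  have hne' : lam - lam⁻¹ ≠ 0 := sub_ne_zero.2 (sub_ne_zero.1 hne).symm
  rw [tauS, tauS, inv_inv, div_add_div _ _ hne hne', div_eq_iff (mul_ne_zero hne hne')]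
  ring

lemma theta_add (h0 : lam ≠ 0) (h1 : q * q * (lam * lam) ≠ 1) :
    thetaS q S.γ S.δ lam + thetaS q S.γ S.δ (q⁻¹ * q⁻¹ * lam⁻¹) = S.δ := by
  have hq0 := S.hq
  have hBA : q⁻¹ * q⁻¹ * (q⁻¹ * q⁻¹ * lam⁻¹)⁻¹ = lam := by
    rw [(by simp [mul_inv]; ring : (q⁻¹ * q⁻¹ * lam⁻¹)⁻¹ = q * q * lam)]
    field_simp
  have hAB : lam - q⁻¹ * q⁻¹ * lam⁻¹ ≠ 0 := by
    rw [sub_ne_zero]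
    exact fun h => h1 (qsq_of_eq S.hq h0 h)
  have hBA' : q⁻¹ * q⁻¹ * lam⁻¹ - lam ≠ 0 := sub_ne_zero.2 (sub_ne_zero.1 hAB).symm
  rw [thetaS, thetaS, hBA, div_add_div _ _ hAB hBA', div_eq_iff (mul_ne_zero hAB hBA')]
  ring

end Setup

end HqModAux
namespace HqModAux

namespace Setup

open Module Submodule

variable {F : Type*} [Field F] {q : F} {V : Type*} [AddCommGroup V] [Module F V]
variable (S : Setup F q V) {lam : F} {v w : V}

lemma eigen_disjoint (lam : F) :
    Disjoint (Module.End.eigenspace S.M.X lam)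
      (⨆ (ρ : F) (_ : ρ ≠ lam), Module.End.eigenspace S.M.X ρ) :=
  (Module.End.eigenspaces_iSupIndep S.M.X) lam

lemma range_sub_le (lam : F) :
    Submodule.map (S.M.X - lam • 1) ⊤
      ≤ ⨆ (ρ : F) (_ : ρ ≠ lam), Module.End.eigenspace S.M.X ρ := by
  have htop : (⊤ : Submodule F V) = ⨆ ρ : F, Module.End.eigenspace S.M.X ρ := S.hX.symm
  rw [htop, Submodule.map_iSup]
  apply iSup_le
  intro ρ
  by_cases hρ : ρ = lam
  · subst hρ
    have : Submodule.map (S.M.X - ρ • 1) (Module.End.eigenspace S.M.X ρ) = ⊥ := by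
      rw [eq_bot_iff]
      rintro _ ⟨u, hu, rfl⟩
      simp only [Submodule.mem_bot, LinearMap.sub_apply, LinearMap.smul_apply,
        Module.End.one_apply]
      rw [X_app S hu, sub_self]
    rw [this]
    exact bot_le
  · refine le_trans ?_ (le_iSup₂ ρ hρ)
    rintro _ ⟨u, hu, rfl⟩
    simp only [LinearMap.sub_apply, LinearMap.smul_apply, Module.End.one_apply]
    rw [X_app S hu]
    exact Submodule.sub_mem _ (Submodule.smul_mem _ _ hu) (Submodule.smul_mem _ _ hu)

/-- Absorption: if `X w = lam • w + d • v` with `v` in the `lam`-eigenspace, then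
`w` is itself in the `lam`-eigenspace (uses diagonalizability). -/
lemma self_mem {d : F} (hv : v ∈ Module.End.eigenspace S.M.X lam)
    (hw : S.M.X w = lam • w + d • v) : w ∈ Module.End.eigenspace S.M.X lam := by
  have h1 : S.M.X w - lam • w ∈ Module.End.eigenspace S.M.X lam := by
    rw [hw, add_sub_cancel_left]
    exact Submodule.smul_mem _ _ hv
  have h2 : S.M.X w - lam • w ∈ Submodule.map (S.M.X - lam • 1) ⊤ := by
    refine ⟨w, Submodule.mem_top, ?_⟩
    simp [LinearMap.sub_apply]
  have h3 : S.M.X w - lam • w = 0 := by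
    have := (eigen_disjoint S lam).le_bot ⟨h1, range_sub_le S lam h2⟩
    simpa using this
  rw [Module.End.mem_eigenspace_iff]
  exact sub_eq_zero.1 h3

end Setup

end HqModAux
namespace HqModAux

namespace Setup

open Module Submodule

variable {F : Type*} [Field F] {q : F} {V : Type*} [AddCommGroup V] [Module F V]
variable (S : Setup F q V) {lam : F} {v w : V}

lemma t3_self (h0 : lam ≠ 0) (h1 : lam * lam = 1)
    (hv : v ∈ Module.End.eigenspace S.M.X lam) :
    S.M.t 3 v ∈ Module.End.eigenspace S.M.X lam := by
  have hinv : lam⁻¹ = lam := inv_eq_of_mul_eq_one_right h1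
  have hw := X_t3_app S h0 hv
  rw [hinv] at hw
  exact self_mem S (d := -(S.α - S.β * lam)) hv (by rw [hw]; module)

lemma t1_self (h0 : lam ≠ 0) (h1 : q * q * (lam * lam) = 1)
    (hv : v ∈ Module.End.eigenspace S.M.X lam) :
    S.M.t 1 v ∈ Module.End.eigenspace S.M.X lam := by
  have h2 : (q * q * lam) * lam = 1 := by rw [← h1]; ring
  have hinv : q⁻¹ * q⁻¹ * lam⁻¹ = lam := by
    calc q⁻¹ * q⁻¹ * lam⁻¹ = (q * q * lam)⁻¹ := by rw [mul_inv, mul_inv]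
      _ = lam := inv_eq_of_mul_eq_one_right h2
  have hw := X_t1_app S h0 hv
  rw [hinv] at hw
  exact self_mem S hv hw

end Setup

section Values

variable {F : Type*} [Field F] {q μ : F}

lemma pow_inj (hq : q ≠ 0) (hqru : ∀ m : ℕ, 1 ≤ m → q ^ m ≠ 1) {a b : ℕ}
    (h : q ^ a = q ^ b) : a = b := by
  by_contra hne
  wlog hab : a < b generalizing a b
  · exact this h.symm (Ne.symm hne) (by omega)
  have h1 : q ^ a * q ^ (b - a) = q ^ a * 1 := by
    rw [← pow_add, mul_one, show a + (b - a) = b by omega, h]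
  exact hqru (b - a) (by omega) (mul_left_cancel₀ (pow_ne_zero a hq) h1)

lemma mu_sq_eq_of (hq : q ≠ 0) (hμ0 : μ ≠ 0) {a b : ℕ}
    (h : q ^ a * μ⁻¹ = (q ^ b)⁻¹ * μ) : μ * μ = q ^ (a + b) := by
  have h2 : q ^ a * μ⁻¹ * (μ * q ^ b) = (q ^ b)⁻¹ * μ * (μ * q ^ b) := by rw [h]
  have h3 : q ^ a * μ⁻¹ * (μ * q ^ b) = q ^ (a + b) * (μ⁻¹ * μ) := by rw [pow_add]; ring
  have h4 : (q ^ b)⁻¹ * μ * (μ * q ^ b) = (μ * μ) * ((q ^ b)⁻¹ * q ^ b) := by ring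
  rw [h3, h4, inv_mul_cancel₀ hμ0, inv_mul_cancel₀ (pow_ne_zero _ hq), mul_one, mul_one] at h2
  exact h2.symm

lemma key_ne (hq : q ≠ 0) (hμ0 : μ ≠ 0) (hW : ∀ b : ℕ, Even b → μ * μ ≠ q ^ b) {a b : ℕ}
    (hab : Even (a + b)) : q ^ a * μ⁻¹ ≠ (q ^ b)⁻¹ * μ :=
  fun h => hW (a + b) hab (mu_sq_eq_of hq hμ0 h)

lemma key_ne2 (hq : q ≠ 0) (hqru : ∀ m : ℕ, 1 ≤ m → q ^ m ≠ 1) (hμ0 : μ ≠ 0) {a b : ℕ}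
    (hab : a ≠ b) : q ^ a * μ⁻¹ ≠ q ^ b * μ⁻¹ := by
  intro h
  exact hab (pow_inj hq hqru (mul_right_cancel₀ (inv_ne_zero hμ0) h))

lemma key_ne3 (hq : q ≠ 0) (hqru : ∀ m : ℕ, 1 ≤ m → q ^ m ≠ 1) (hμ0 : μ ≠ 0) {a b : ℕ}
    (hab : a ≠ b) : (q ^ a)⁻¹ * μ ≠ (q ^ b)⁻¹ * μ := by
  intro h
  have h2 : (q ^ a)⁻¹ = (q ^ b)⁻¹ := mul_right_cancel₀ hμ0 h
  exact hab (pow_inj hq hqru (inv_injective h2))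

/-- the sequence of eigenvalues on the cascade side of the cut. -/
noncomputable def sv (q μ : F) (k : ℕ) : F :=
  if Even k then q ^ k * μ⁻¹ else (q ^ (k + 1))⁻¹ * μ

lemma sv_zero : sv q μ 0 = μ⁻¹ := by simp [sv]

lemma sv_even {k : ℕ} (hk : Even k) : sv q μ k = q ^ k * μ⁻¹ := if_pos hk
lemma sv_odd {k : ℕ} (hk : ¬ Even k) : sv q μ k = (q ^ (k + 1))⁻¹ * μ := if_neg hk

lemma shape1_inv (a : ℕ) : (q ^ a * μ⁻¹)⁻¹ = (q ^ a)⁻¹ * μ := by rw [mul_inv, inv_inv]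
lemma shape2_inv (a : ℕ) : ((q ^ a)⁻¹ * μ)⁻¹ = q ^ a * μ⁻¹ := by rw [mul_inv, inv_inv]

section WithHyps

variable (hq : q ≠ 0) (hqru : ∀ m : ℕ, 1 ≤ m → q ^ m ≠ 1) (hμ0 : μ ≠ 0)
variable (hW : ∀ b : ℕ, Even b → μ * μ ≠ q ^ b)

include hq hμ0 in
lemma sv_ne_zero (k : ℕ) : sv q μ k ≠ 0 := by
  unfold sv
  split
  · exact mul_ne_zero (pow_ne_zero _ hq) (inv_ne_zero hμ0)
  · exact mul_ne_zero (inv_ne_zero (pow_ne_zero _ hq)) hμ0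

include hq hμ0 hW in
lemma sv_sq_ne_one (k : ℕ) : sv q μ k * sv q μ k ≠ 1 := by
  intro h
  have hx0 : sv q μ k ≠ 0 := sv_ne_zero hq hμ0 k
  have hinv : (sv q μ k)⁻¹ = sv q μ k := inv_eq_of_mul_eq_one_right h
  by_cases hk : Even k
  · rw [sv_even hk, shape1_inv] at hinv
    exact key_ne hq hμ0 hW (⟨k, rfl⟩ : Even (k + k)) hinv.symm
  · rw [sv_odd hk, shape2_inv] at hinv
    exact key_ne hq hμ0 hW (⟨k + 1, rfl⟩ : Even ((k + 1) + (k + 1))) hinv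

include hq hμ0 hW in
lemma sv_sq_ne_q (k : ℕ) : q * q * (sv q μ k * sv q μ k) ≠ 1 := by
  intro h
  have h2 : (q * sv q μ k) * (q * sv q μ k) = 1 := by rw [← h]; ring
  have hinv : (q * sv q μ k)⁻¹ = q * sv q μ k := inv_eq_of_mul_eq_one_right h2
  by_cases hk : Even k
  · have e1 : q * sv q μ k = q ^ (k + 1) * μ⁻¹ := by
      rw [sv_even hk, pow_succ]; ring
    rw [e1, shape1_inv] at hinv
    exact key_ne hq hμ0 hW (⟨k + 1, rfl⟩ : Even ((k + 1) + (k + 1))) hinv.symm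
  · have e1 : q * sv q μ k = (q ^ k)⁻¹ * μ := by
      rw [sv_odd hk, pow_succ, mul_inv]
      field_simp
    rw [e1, shape2_inv] at hinv
    exact key_ne hq hμ0 hW (⟨k, rfl⟩ : Even (k + k)) hinv

end WithHyps

end Values

end HqModAux
namespace HqModAux

section Values2

variable {F : Type*} [Field F] {q μ : F}
variable (hq : q ≠ 0) (hqru : ∀ m : ℕ, 1 ≤ m → q ^ m ≠ 1) (hμ0 : μ ≠ 0)
variable (hW : ∀ b : ℕ, Even b → μ * μ ≠ q ^ b)

include hq in
lemma qq_cancel (x : F) : q * q * (q⁻¹ * q⁻¹ * x) = x := by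
  field_simp

include hq in
lemma qq_cancel' (x : F) : q⁻¹ * q⁻¹ * (q * q * x) = x := by
  field_simp

include hq hμ0 in
lemma sv_succ_even {k : ℕ} (hk : Even k) :
    sv q μ (k + 1) = q⁻¹ * q⁻¹ * (sv q μ k)⁻¹ := by
  rw [sv_odd (by simp [Nat.even_add_one, hk]), sv_even hk, shape1_inv]
  rw [show k + 1 + 1 = k + 2 from rfl, pow_add]
  field_simp

include hq hμ0 in
lemma sv_succ_odd {k : ℕ} (hk : ¬ Even k) :
    sv q μ (k + 1) = (sv q μ k)⁻¹ := by
  rw [sv_even (by simp [Nat.even_add_one, hk]), sv_odd hk, shape2_inv]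

include hq hμ0 in
lemma sv_down_t3 {k : ℕ} (hk : Even (k + 1)) :
    (sv q μ (k + 1))⁻¹ = sv q μ k := by
  have hk' : ¬ Even k := by simpa [Nat.even_add_one] using hk
  rw [sv_succ_odd hq hμ0 hk', inv_inv]

include hq hμ0 in
lemma sv_down_t1 {k : ℕ} (hk : ¬ Even (k + 1)) :
    q⁻¹ * q⁻¹ * (sv q μ (k + 1))⁻¹ = sv q μ k := by
  have hk' : Even k := by simpa [Nat.even_add_one] using hk
  rw [sv_succ_even hq hμ0 hk', mul_inv, mul_inv, inv_inv, inv_inv]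
  exact qq_cancel' hq _

include hq hqru hμ0 hW in
lemma mu_ne_sv (k : ℕ) : μ ≠ sv q μ k := by
  intro h
  by_cases hk : Even k
  · apply key_ne hq hμ0 hW (a := k) (b := 0) (by simpa using hk)
    rw [sv_even hk] at h
    rw [← h, pow_zero, inv_one, one_mul]
  · rw [sv_odd hk] at h
    have h3 : (1 : F) * μ = (q ^ (k + 1))⁻¹ * μ := by rw [one_mul]; exact h
    have h4 := mul_right_cancel₀ hμ0 h3
    have h5 := congrArg (fun x : F => x⁻¹) h4
    simp only [inv_one, inv_inv] at h5
    exact hqru (k + 1) (by omega) h5.symm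

include hq hqru hμ0 hW in
lemma sv_succ_ne_sv_zero (k : ℕ) : sv q μ (k + 1) ≠ μ⁻¹ := by
  intro h
  by_cases hk : Even (k + 1)
  · rw [sv_even hk] at h
    have h3 : q ^ (k + 1) * μ⁻¹ = 1 * μ⁻¹ := by rw [one_mul]; exact h
    exact hqru (k + 1) (by omega) (mul_right_cancel₀ (inv_ne_zero hμ0) h3)
  · rw [sv_odd hk] at h
    have hk0 : Even k := by simpa [Nat.even_add_one] using hk
    have hk2 : Even (0 + (k + 1 + 1)) := by
      simpa using hk0.add (by decide : Even 2)
    apply key_ne hq hμ0 hW (a := 0) (b := k + 1 + 1) hk2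
    rw [pow_zero, one_mul]
    exact h.symm

include hq hqru hμ0 hW in
lemma inv_notin {lam : F} (hnotin : ∀ k, lam ≠ sv q μ k) (hmu : lam ≠ μ) :
    ∀ k, lam⁻¹ ≠ sv q μ k := by
  intro k h
  by_cases hk : Even k
  · rw [sv_even hk] at h
    have hl : lam = (q ^ k)⁻¹ * μ := by rw [← inv_inv lam, h, shape1_inv]
    rcases Nat.eq_zero_or_pos k with hk0 | hkpos
    · subst hk0
      simp only [pow_zero, inv_one, one_mul] at hl
      exact hmu hl
    · apply hnotin (k - 1)
      rw [hl, sv_odd (by rw [Nat.even_sub (by omega)]; simp [hk]), show k - 1 + 1 = k from by omega]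
  · rw [sv_odd hk] at h
    have hl : lam = q ^ (k + 1) * μ⁻¹ := by rw [← inv_inv lam, h, shape2_inv]
    apply hnotin (k + 1)
    rw [hl, sv_even (by simpa [Nat.even_add_one] using hk)]

include hq hqru hμ0 hW in
lemma thetaval_notin {lam : F} (hnotin : ∀ k, lam ≠ sv q μ k) (hlam0 : lam ≠ 0) :
    ∀ k, q⁻¹ * q⁻¹ * lam⁻¹ ≠ sv q μ k := by
  intro k h
  by_cases hk : Even k
  · have h2 : lam⁻¹ = q ^ (k + 2) * μ⁻¹ := by
      calc lam⁻¹ = q * q * (q⁻¹ * q⁻¹ * lam⁻¹) := (qq_cancel hq _).symm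
        _ = q * q * sv q μ k := by rw [h]
        _ = q ^ (k + 2) * μ⁻¹ := by rw [sv_even hk, pow_add]; ring
    have hl : lam = (q ^ (k + 2))⁻¹ * μ := by rw [← inv_inv lam, h2, shape1_inv]
    apply hnotin (k + 1)
    rw [hl, sv_odd (by simpa [Nat.even_add_one] using hk)]
  · have hk1 : 1 ≤ k := Nat.pos_of_ne_zero (fun h0 => hk (h0 ▸ Even.zero))
    have h2 : lam⁻¹ = (q ^ (k - 1))⁻¹ * μ := by
      calc lam⁻¹ = q * q * (q⁻¹ * q⁻¹ * lam⁻¹) := (qq_cancel hq _).symm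
        _ = q * q * sv q μ k := by rw [h]
        _ = (q ^ (k - 1))⁻¹ * μ := by
            rw [sv_odd hk, show k + 1 = (k - 1) + 2 from by omega, pow_add, mul_inv]
            field_simp
    have hl : lam = q ^ (k - 1) * μ⁻¹ := by rw [← inv_inv lam, h2, shape2_inv]
    apply hnotin (k - 1)
    rw [hl, sv_even (by rw [Nat.even_sub (by omega)]; simp [hk])]

end Values2

end HqModAux
namespace HqModAux

namespace Setup

open Module Submodule

variable {F : Type*} [Field F] {q : F} {V : Type*} [AddCommGroup V] [Module F V]

/-- crossing operators along the cascade. -/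
noncomputable def cop (S : Setup F q V) (μ : F) (k : ℕ) : Module.End F V :=
  if Even k then S.M.t 1 - thetaS q S.γ S.δ (sv q μ k) • 1
  else S.M.t 3 - tauS S.α S.β (sv q μ k) • 1

lemma cop_even (S : Setup F q V) (μ : F) {k : ℕ} (hk : Even k) :
    cop S μ k = S.M.t 1 - thetaS q S.γ S.δ (sv q μ k) • 1 := if_pos hk

lemma cop_odd (S : Setup F q V) (μ : F) {k : ℕ} (hk : ¬ Even k) :
    cop S μ k = S.M.t 3 - tauS S.α S.β (sv q μ k) • 1 := if_neg hk

/-- the cascade of subspaces. -/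
noncomputable def MM (S : Setup F q V) (μ : F) : ℕ → Submodule F V
  | 0 => Module.End.eigenspace S.M.X μ⁻¹ ⊓ LinearMap.ker (S.M.t 3 - tauS S.α S.β μ⁻¹ • 1)
  | (k + 1) => Submodule.map (cop S μ k) (MM S μ k)

/-- the invariant subspace witnessing the contradiction. -/
noncomputable def WW (S : Setup F q V) (μ : F) : Submodule F V :=
  (⨆ (lam : F) (_ : ∀ k, lam ≠ sv q μ k), Module.End.eigenspace S.M.X lam)
    ⊔ (⨆ k, MM S μ k)

variable (S : Setup F q V) {μ lam : F} {v : V}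

lemma MM_zero : MM S μ 0
    = Module.End.eigenspace S.M.X μ⁻¹ ⊓ LinearMap.ker (S.M.t 3 - tauS S.α S.β μ⁻¹ • 1) := rfl

lemma MM_succ (k : ℕ) : MM S μ (k + 1) = Submodule.map (cop S μ k) (MM S μ k) := rfl

lemma E_le_WW (hlam : ∀ k, lam ≠ sv q μ k) :
    Module.End.eigenspace S.M.X lam ≤ WW S μ :=
  le_trans
    (le_iSup₂ (f := fun lam (_ : ∀ k, lam ≠ sv q μ k) => Module.End.eigenspace S.M.X lam)
      lam hlam) le_sup_left

lemma MM_le_WW (k : ℕ) : MM S μ k ≤ WW S μ :=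
  le_trans (le_iSup _ k) le_sup_right

section Cascade

variable (hμ0 : μ ≠ 0) (hW : ∀ b : ℕ, Even b → μ * μ ≠ q ^ b)

include hμ0 hW in
lemma MM_le : ∀ k, MM S μ k ≤ Module.End.eigenspace S.M.X (sv q μ k) := by
  intro k
  induction k with
  | zero => rw [sv_zero]; exact inf_le_left
  | succ k ih =>
    rintro _ ⟨u, hu, rfl⟩
    have hu' := ih hu
    have h0 := sv_ne_zero S.hq hμ0 k
    by_cases hek : Even k
    · rw [cop_even S μ hek]
      have hcross := t1_cross S h0 (sv_sq_ne_q S.hq hμ0 hW k) hu'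
      rw [← sv_succ_even S.hq hμ0 hek] at hcross
      simpa using hcross
    · rw [cop_odd S μ hek]
      have hcross := t3_cross S h0 (sv_sq_ne_one S.hq hμ0 hW k) hu'
      rw [← sv_succ_odd S.hq hμ0 hek] at hcross
      simpa using hcross

end Cascade

end Setup

end HqModAux
namespace HqModAux

namespace Setup

open Module Submodule

variable {F : Type*} [Field F] {q : F} {V : Type*} [AddCommGroup V] [Module F V]
variable (S : Setup F q V) {μ lam : F} {v : V}

lemma recon_mem {f : Module.End F V} {c : F} {v : V} {P : Submodule F V}
    (h1 : c • v ∈ P) (h2 : f v - c • v ∈ P) : f v ∈ P := by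
  have : f v = (f v - c • v) + c • v := (sub_add_cancel _ _).symm
  rw [this]
  exact add_mem h2 h1

section Main

variable (hμ0 : μ ≠ 0) (hqru : ∀ m : ℕ, 1 ≤ m → q ^ m ≠ 1)
variable (hW : ∀ b : ℕ, Even b → μ * μ ≠ q ^ b)
variable (hc : tauS S.α S.β μ * tauS S.α S.β μ⁻¹ - 1 = 0)

include hμ0 hqru hW hc in
lemma WWinvE (hlam : ∀ k, lam ≠ sv q μ k) (hv : v ∈ Module.End.eigenspace S.M.X lam) :
    ∀ i : Fin 4, S.M.t i v ∈ WW S μ := by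
  intro i
  by_cases h0 : lam = 0
  · have hv0 : v = 0 := by
      subst h0
      rw [eigen_zero] at hv
      simpa using hv
    rw [hv0, map_zero]
    exact zero_mem _
  have hvW : v ∈ WW S μ := E_le_WW S hlam hv
  have h3 : S.M.t 3 v ∈ WW S μ := by
    by_cases h1 : lam * lam = 1
    · exact E_le_WW S hlam (t3_self S h0 h1 hv)
    · have hw := t3_cross S h0 h1 hv
      by_cases hmu : lam = μ
      · subst hmu
        refine recon_mem (c := tauS S.α S.β lam) (smul_mem _ _ hvW) (MM_le_WW S 0 ?_)
        rw [MM_zero, Submodule.mem_inf]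
        refine ⟨hw, ?_⟩
        rw [LinearMap.mem_ker]
        have hcomp := comp3 S (tauS S.α S.β lam⁻¹) (tauS S.α S.β lam)
          (by rw [add_comm]; exact tau_add S h0 h1) v
        have he : (S.M.t 3 - tauS S.α S.β lam • 1) v = S.M.t 3 v - tauS S.α S.β lam • v := by
          simp [LinearMap.sub_apply]
        rw [← he, hcomp, mul_comm, hc, zero_smul]
      · have hnot := inv_notin S.hq hqru hμ0 hW hlam hmu
        exact recon_mem (smul_mem _ _ hvW) (E_le_WW S hnot hw)
  have h1m : S.M.t 1 v ∈ WW S μ := by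
    by_cases hdeg : q * q * (lam * lam) = 1
    · exact E_le_WW S hlam (t1_self S h0 hdeg hv)
    · have hw := t1_cross S h0 hdeg hv
      have hnot := thetaval_notin S.hq hqru hμ0 hW hlam h0
      exact recon_mem (smul_mem _ _ hvW) (E_le_WW S hnot hw)
  fin_cases i
  · show S.M.t 0 v ∈ WW S μ
    rw [t0_app S hv]
    exact sub_mem (smul_mem _ _ hvW) (smul_mem _ _ h3)
  · exact h1m
  · show S.M.t 2 v ∈ WW S μ
    rw [t2_app S h0 hv]
    exact sub_mem (smul_mem _ _ hvW) (smul_mem _ _ h1m)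
  · exact h3

end Main

end Setup

end HqModAux
namespace HqModAux

namespace Setup

open Module Submodule

variable {F : Type*} [Field F] {q : F} {V : Type*} [AddCommGroup V] [Module F V]
variable (S : Setup F q V) {μ lam : F} {v : V}

section MainM

variable (hμ0 : μ ≠ 0) (hqru : ∀ m : ℕ, 1 ≤ m → q ^ m ≠ 1)
variable (hW : ∀ b : ℕ, Even b → μ * μ ≠ q ^ b)

include hμ0 hW in
lemma WWinvM (k : ℕ) (hv : v ∈ MM S μ k) : ∀ i : Fin 4, S.M.t i v ∈ WW S μ := by
  intro i
  have hE : v ∈ Module.End.eigenspace S.M.X (sv q μ k) := MM_le S hμ0 hW k hv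
  have h0 : sv q μ k ≠ 0 := sv_ne_zero S.hq hμ0 k
  have hvW : v ∈ WW S μ := MM_le_WW S k hv
  have h31 : S.M.t 3 v ∈ WW S μ ∧ S.M.t 1 v ∈ WW S μ := by
    cases k with
    | zero =>
      have hv' := hv
      rw [MM_zero, Submodule.mem_inf] at hv'
      obtain ⟨hv1, hv2⟩ := hv'
      rw [LinearMap.mem_ker] at hv2
      have ht3 : S.M.t 3 v = tauS S.α S.β μ⁻¹ • v := by
        have he : (S.M.t 3 - tauS S.α S.β μ⁻¹ • 1) v
            = S.M.t 3 v - tauS S.α S.β μ⁻¹ • v := by simp [LinearMap.sub_apply]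
        rw [he] at hv2
        exact sub_eq_zero.1 hv2
      constructor
      · rw [ht3]
        exact smul_mem _ _ hvW
      · refine recon_mem (c := thetaS q S.γ S.δ (sv q μ 0)) (smul_mem _ _ hvW)
          (MM_le_WW S 1 ?_)
        rw [MM_succ]
        refine ⟨v, hv, ?_⟩
        rw [cop_even S μ Even.zero]
        simp [LinearMap.sub_apply]
    | succ k =>
      have hvmap := hv
      rw [MM_succ] at hvmap
      obtain ⟨u, hu, rfl⟩ := hvmap
      by_cases hek : Even k
      · -- cop k = t1 - θ(sv k); index k+1 is odd
        have hok : ¬ Even (k + 1) := by simp [Nat.even_add_one, hek]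
        constructor
        · -- t 3 : crossing goes up into MM (k+2)
          refine recon_mem (c := tauS S.α S.β (sv q μ (k + 1))) (smul_mem _ _ hvW)
            (MM_le_WW S (k + 2) ?_)
          rw [MM_succ]
          refine ⟨cop S μ k u, hv, ?_⟩
          rw [cop_odd S μ hok]
          simp [LinearMap.sub_apply]
        · -- t 1 : crossing goes down into MM k
          refine recon_mem (c := thetaS q S.γ S.δ (sv q μ (k + 1))) (smul_mem _ _ hvW)
            (MM_le_WW S k ?_)
          have hab : thetaS q S.γ S.δ (sv q μ (k + 1)) + thetaS q S.γ S.δ (sv q μ k) = S.δ := by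
            rw [add_comm, sv_succ_even S.hq hμ0 hek]
            exact theta_add S (sv_ne_zero S.hq hμ0 k) (sv_sq_ne_q S.hq hμ0 hW k)
          have hcomp := comp1 S (thetaS q S.γ S.δ (sv q μ (k + 1))) (thetaS q S.γ S.δ (sv q μ k))
            hab u
          have he1 : (S.M.t 1 - thetaS q S.γ S.δ (sv q μ k) • 1) u = cop S μ k u := by
            rw [cop_even S μ hek]
          rw [he1] at hcomp
          have he2 : (S.M.t 1 - thetaS q S.γ S.δ (sv q μ (k + 1)) • 1) (cop S μ k u)
              = S.M.t 1 (cop S μ k u) - thetaS q S.γ S.δ (sv q μ (k + 1)) • (cop S μ k u) := by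
            simp [LinearMap.sub_apply]
          rw [he2] at hcomp
          rw [hcomp]
          exact smul_mem _ _ hu
      · -- cop k = t3 - τ(sv k); index k+1 is even
        have hok : Even (k + 1) := Nat.even_add_one.2 hek
        constructor
        · -- t 3 : crossing goes down into MM k
          refine recon_mem (c := tauS S.α S.β (sv q μ (k + 1))) (smul_mem _ _ hvW)
            (MM_le_WW S k ?_)
          have hab : tauS S.α S.β (sv q μ (k + 1)) + tauS S.α S.β (sv q μ k) = S.β := by
            rw [add_comm, sv_succ_odd S.hq hμ0 hek]
            exact tau_add S (sv_ne_zero S.hq hμ0 k) (sv_sq_ne_one S.hq hμ0 hW k)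
          have hcomp := comp3 S (tauS S.α S.β (sv q μ (k + 1))) (tauS S.α S.β (sv q μ k)) hab u
          have he1 : (S.M.t 3 - tauS S.α S.β (sv q μ k) • 1) u = cop S μ k u := by
            rw [cop_odd S μ hek]
          rw [he1] at hcomp
          have he2 : (S.M.t 3 - tauS S.α S.β (sv q μ (k + 1)) • 1) (cop S μ k u)
              = S.M.t 3 (cop S μ k u) - tauS S.α S.β (sv q μ (k + 1)) • (cop S μ k u) := by
            simp [LinearMap.sub_apply]
          rw [he2] at hcomp
          rw [hcomp]
          exact smul_mem _ _ hu
        · -- t 1 : crossing goes up into MM (k+2)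
          refine recon_mem (c := thetaS q S.γ S.δ (sv q μ (k + 1))) (smul_mem _ _ hvW)
            (MM_le_WW S (k + 2) ?_)
          rw [MM_succ]
          refine ⟨cop S μ k u, hv, ?_⟩
          rw [cop_even S μ hok]
          simp [LinearMap.sub_apply]
  fin_cases i
  · show S.M.t 0 v ∈ WW S μ
    rw [t0_app S hE]
    exact sub_mem (smul_mem _ _ hvW) (smul_mem _ _ h31.1)
  · exact h31.2
  · show S.M.t 2 v ∈ WW S μ
    rw [t2_app S h0 hE]
    exact sub_mem (smul_mem _ _ hvW) (smul_mem _ _ h31.2)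
  · exact h31.1

end MainM

end Setup

end HqModAux
namespace HqModAux

namespace Setup

open Module Submodule

variable {F : Type*} [Field F] {q : F} {V : Type*} [AddCommGroup V] [Module F V]
variable (S : Setup F q V) {μ : F} {v : V}

section NoBad

variable (hμ0 : μ ≠ 0) (hqru : ∀ m : ℕ, 1 ≤ m → q ^ m ≠ 1)
variable (hW : ∀ b : ℕ, Even b → μ * μ ≠ q ^ b)
variable (hc : tauS S.α S.β μ * tauS S.α S.β μ⁻¹ - 1 = 0)

include hμ0 hqru hW hc in
lemma WW_inv : ∀ i, ∀ v ∈ WW S μ, S.M.t i v ∈ WW S μ := by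
  intro i
  suffices h : WW S μ ≤ Submodule.comap (S.M.t i) (WW S μ) by
    intro v hv
    exact Submodule.mem_comap.1 (h hv)
  apply sup_le
  · apply iSup₂_le
    intro lam hlam v hv
    exact Submodule.mem_comap.2 (WWinvE S hμ0 hqru hW hc hlam hv i)
  · apply iSup_le
    intro k v hv
    exact Submodule.mem_comap.2 (WWinvM S hμ0 hW k hv i)

include hμ0 hqru hW in
lemma extraction (hEν : Module.End.eigenspace S.M.X μ⁻¹ ≤ WW S μ) :
    ∀ v ∈ Module.End.eigenspace S.M.X μ⁻¹, S.M.t 3 v = tauS S.α S.β μ⁻¹ • v := by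
  intro v hv
  have hvW := hEν hv
  have hsplit : WW S μ ≤ MM S μ 0
      ⊔ (⨆ (lam : F) (_ : lam ≠ μ⁻¹), Module.End.eigenspace S.M.X lam) := by
    apply sup_le
    · apply iSup₂_le
      intro lam hlam
      refine le_trans ?_ le_sup_right
      refine le_iSup₂ (f := fun lam (_ : lam ≠ μ⁻¹) => Module.End.eigenspace S.M.X lam) lam ?_
      have := hlam 0
      rwa [sv_zero] at this
    · apply iSup_le
      intro k
      cases k with
      | zero => exact le_sup_left
      | succ k =>
        refine le_trans ?_ le_sup_right
        refine le_trans (MM_le S hμ0 hW (k + 1))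
          (le_iSup₂ (f := fun lam (_ : lam ≠ μ⁻¹) => Module.End.eigenspace S.M.X lam)
            (sv q μ (k + 1)) ?_)
        exact sv_succ_ne_sv_zero S.hq hqru hμ0 hW k
  rcases Submodule.mem_sup.1 (hsplit hvW) with ⟨a, ha, b, hb, hab⟩
  have haE : a ∈ Module.End.eigenspace S.M.X μ⁻¹ := by
    rw [MM_zero, Submodule.mem_inf] at ha
    exact ha.1
  have hbE : b ∈ Module.End.eigenspace S.M.X μ⁻¹ := by
    have : b = v - a := by rw [← hab]; abel
    rw [this]
    exact sub_mem hv haE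
  have hb0 : b = 0 := by
    have := (eigen_disjoint S μ⁻¹).le_bot ⟨hbE, hb⟩
    simpa using this
  have hva : v = a := by rw [← hab, hb0, add_zero]
  have ha2 : v ∈ MM S μ 0 := hva ▸ ha
  rw [MM_zero, Submodule.mem_inf] at ha2
  have := ha2.2
  rw [LinearMap.mem_ker] at this
  have he : (S.M.t 3 - tauS S.α S.β μ⁻¹ • 1) v = S.M.t 3 v - tauS S.α S.β μ⁻¹ • v := by
    simp [LinearMap.sub_apply]
  rw [he] at this
  exact sub_eq_zero.1 this

include hμ0 hqru hW in
lemma final_contra (hμE : S.M.X.HasEigenvalue μ) (hνE : S.M.X.HasEigenvalue μ⁻¹)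
    (ht3ν : ∀ v ∈ Module.End.eigenspace S.M.X μ⁻¹,
      S.M.t 3 v = tauS S.α S.β μ⁻¹ • v) : False := by
  set W2 := ⨆ k, Module.End.eigenspace S.M.X (sv q μ k) with hW2
  have hW2le : ∀ k, Module.End.eigenspace S.M.X (sv q μ k) ≤ W2 := fun k => by
    rw [hW2]
    exact le_iSup (fun k => Module.End.eigenspace S.M.X (sv q μ k)) k
  have hinv : ∀ i, ∀ v ∈ W2, S.M.t i v ∈ W2 := by
    intro i
    suffices h : W2 ≤ Submodule.comap (S.M.t i) W2 by
      intro v hv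
      exact Submodule.mem_comap.1 (h hv)
    apply iSup_le
    intro k v hv
    rw [Submodule.mem_comap]
    have h0 : sv q μ k ≠ 0 := sv_ne_zero S.hq hμ0 k
    have hvW : v ∈ W2 := hW2le k hv
    have h3 : S.M.t 3 v ∈ W2 := by
      cases k with
      | zero =>
        have hv' : v ∈ Module.End.eigenspace S.M.X μ⁻¹ := by rwa [sv_zero] at hv
        rw [ht3ν v hv']
        exact smul_mem _ _ hvW
      | succ k =>
        have hcross := t3_cross S h0 (sv_sq_ne_one S.hq hμ0 hW (k + 1)) hv
        by_cases hek : Even (k + 1)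
        · rw [sv_down_t3 S.hq hμ0 hek] at hcross
          exact recon_mem (smul_mem _ _ hvW) (hW2le k hcross)
        · rw [← sv_succ_odd S.hq hμ0 hek] at hcross
          exact recon_mem (smul_mem _ _ hvW) (hW2le (k + 2) hcross)
    have h1 : S.M.t 1 v ∈ W2 := by
      have hcross := t1_cross S h0 (sv_sq_ne_q S.hq hμ0 hW k) hv
      by_cases hek : Even k
      · rw [← sv_succ_even S.hq hμ0 hek] at hcross
        exact recon_mem (smul_mem _ _ hvW) (hW2le (k + 1) hcross)
      · obtain ⟨j, rfl⟩ : ∃ j, k = j + 1 := by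
          cases k with
          | zero => exact absurd Even.zero hek
          | succ j => exact ⟨j, rfl⟩
        rw [sv_down_t1 S.hq hμ0 hek] at hcross
        exact recon_mem (smul_mem _ _ hvW) (hW2le j hcross)
    fin_cases i
    · show S.M.t 0 v ∈ W2
      rw [t0_app S hv]
      exact sub_mem (smul_mem _ _ hvW) (smul_mem _ _ h3)
    · exact h1
    · show S.M.t 2 v ∈ W2
      rw [t2_app S h0 hv]
      exact sub_mem (smul_mem _ _ hvW) (smul_mem _ _ h1)
    · exact h3
  rcases S.hirr.2 W2 hinv with hbot | htop
  · apply hνE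
    rw [eq_bot_iff, ← hbot]
    have := hW2le 0
    rwa [sv_zero] at this
  · apply hμE
    have hEμ : Module.End.eigenspace S.M.X μ ≤ W2 := htop ▸ le_top
    have hle : W2 ≤ ⨆ (lam : F) (_ : lam ≠ μ), Module.End.eigenspace S.M.X lam := by
      apply iSup_le
      intro k
      exact le_iSup₂ (f := fun lam (_ : lam ≠ μ) => Module.End.eigenspace S.M.X lam)
        (sv q μ k) (Ne.symm (mu_ne_sv S.hq hqru hμ0 hW k))
    rw [eq_bot_iff]
    intro v hv
    exact (eigen_disjoint S μ).le_bot ⟨hv, hle (hEμ hv)⟩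

end NoBad

end Setup

end HqModAux
namespace HqModAux

namespace Setup

open Module Submodule

variable {F : Type*} [Field F] {q : F} {V : Type*} [AddCommGroup V] [Module F V]
variable (S : Setup F q V) {μ lam : F} {v : V}

lemma no_bad (hμ0 : μ ≠ 0) (hqru : ∀ m : ℕ, 1 ≤ m → q ^ m ≠ 1)
    (hW : ∀ b : ℕ, Even b → μ * μ ≠ q ^ b)
    (hc : tauS S.α S.β μ * tauS S.α S.β μ⁻¹ - 1 = 0)
    (hμE : S.M.X.HasEigenvalue μ) (hνE : S.M.X.HasEigenvalue μ⁻¹) : False := by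
  rcases S.hirr.2 (WW S μ) (WW_inv S hμ0 hqru hW hc) with hbot | htop
  · apply hμE
    rw [eq_bot_iff, ← hbot]
    exact E_le_WW S (mu_ne_sv S.hq hqru hμ0 hW)
  · exact final_contra S hμ0 hqru hW hμE hνE
      (extraction S hμ0 hqru hW (htop ▸ le_top))

lemma G0_app' (h0 : lam ≠ 0) (h1 : lam * lam ≠ 1)
    (hv : v ∈ Module.End.eigenspace S.M.X lam) :
    S.M.G0 v = (lam⁻¹ - lam) • (S.M.t 3 v - tauS S.α S.β lam • v) := by
  have hne : lam⁻¹ - lam ≠ 0 := sub_ne_zero.2 (fun h => h1 (lam_sq_of_inv_eq h0 h))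
  rw [G0_app S h0 hv, smul_sub, smul_smul]
  have e : (lam⁻¹ - lam) * tauS S.α S.β lam = S.α - S.β * lam := by
    rw [tauS, mul_comm, div_mul_cancel₀ _ hne]
  rw [e]

lemma engine_half (hμ0 : μ ≠ 0) (hμ2 : μ * μ ≠ 1)
    (hcne : tauS S.α S.β μ * tauS S.α S.β μ⁻¹ - 1 ≠ 0) :
    Submodule.map S.M.G0 (Module.End.eigenspace S.M.X μ)
      = Module.End.eigenspace S.M.X μ⁻¹ := by
  have hν0 : μ⁻¹ ≠ 0 := inv_ne_zero hμ0
  have hν2 : μ⁻¹ * μ⁻¹ ≠ 1 := by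
    rw [← mul_inv]
    exact fun h => hμ2 (by rwa [inv_eq_one] at h)
  have hne : μ⁻¹ - μ ≠ 0 := sub_ne_zero.2 (fun h => hμ2 (lam_sq_of_inv_eq hμ0 h))
  apply le_antisymm
  · rintro _ ⟨v, hv, rfl⟩
    rw [G0_app' S hμ0 hμ2 hv]
    exact smul_mem _ _ (t3_cross S hμ0 hμ2 hv)
  · intro w hw
    rw [Submodule.mem_map]
    have hx : S.M.t 3 w - tauS S.α S.β μ⁻¹ • w ∈ Module.End.eigenspace S.M.X μ := by
      have := t3_cross S hν0 hν2 hw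
      rwa [inv_inv] at this
    refine ⟨((μ⁻¹ - μ) * (tauS S.α S.β μ * tauS S.α S.β μ⁻¹ - 1))⁻¹
      • (S.M.t 3 w - tauS S.α S.β μ⁻¹ • w), smul_mem _ _ hx, ?_⟩
    rw [map_smul]
    have hgx : S.M.G0 (S.M.t 3 w - tauS S.α S.β μ⁻¹ • w)
        = (μ⁻¹ - μ) • ((tauS S.α S.β μ * tauS S.α S.β μ⁻¹ - 1) • w) := by
      rw [G0_app' S hμ0 hμ2 hx]
      congr 1
      have hcomp := comp3 S (tauS S.α S.β μ) (tauS S.α S.β μ⁻¹) (tau_add S hμ0 hμ2) w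
      have he : (S.M.t 3 - tauS S.α S.β μ⁻¹ • 1) w = S.M.t 3 w - tauS S.α S.β μ⁻¹ • w := by
        simp [LinearMap.sub_apply]
      rw [he] at hcomp
      have he2 : (S.M.t 3 - tauS S.α S.β μ • 1) (S.M.t 3 w - tauS S.α S.β μ⁻¹ • w)
          = S.M.t 3 (S.M.t 3 w - tauS S.α S.β μ⁻¹ • w)
            - tauS S.α S.β μ • (S.M.t 3 w - tauS S.α S.β μ⁻¹ • w) := by
        simp [LinearMap.sub_apply]
      rw [he2] at hcomp
      exact hcomp
    rw [hgx, smul_smul, smul_smul, mul_assoc,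
      inv_mul_cancel₀ (mul_ne_zero hne hcne), one_smul]

end Setup

end HqModAux
namespace HqModAux

namespace Setup

open Module Submodule

variable {F : Type*} [Field F] {q : F} {V : Type*} [AddCommGroup V] [Module F V]
variable (S : Setup F q V) {μ : F}

lemma engine_aux (hμ0 : μ ≠ 0) (hqru : ∀ m : ℕ, 1 ≤ m → q ^ m ≠ 1)
    (hW : ∀ b : ℕ, Even b → μ * μ ≠ q ^ b)
    (hμE : S.M.X.HasEigenvalue μ) (hνE : S.M.X.HasEigenvalue μ⁻¹) :
    Submodule.map S.M.G0 (Module.End.eigenspace S.M.X μ)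
        = Module.End.eigenspace S.M.X μ⁻¹ ∧
      Submodule.map S.M.G0 (Module.End.eigenspace S.M.X μ⁻¹)
        = Module.End.eigenspace S.M.X μ := by
  have hμ2 : μ * μ ≠ 1 := by simpa using hW 0 Even.zero
  have hν0 : μ⁻¹ ≠ 0 := inv_ne_zero hμ0
  have hν2 : μ⁻¹ * μ⁻¹ ≠ 1 := by
    rw [← mul_inv]
    exact fun h => hμ2 (by rwa [inv_eq_one] at h)
  by_cases hc : tauS S.α S.β μ * tauS S.α S.β μ⁻¹ - 1 = 0
  · exact (no_bad S hμ0 hqru hW hc hμE hνE).elim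
  · constructor
    · exact engine_half S hμ0 hμ2 hc
    · have hc' : tauS S.α S.β μ⁻¹ * tauS S.α S.β (μ⁻¹)⁻¹ - 1 ≠ 0 := by
        rw [inv_inv, mul_comm]
        exact hc
      have h2 := engine_half S (μ := μ⁻¹) hν0 hν2 hc'
      rwa [inv_inv] at h2

lemma engine (hqru : ∀ m : ℕ, 1 ≤ m → q ^ m ≠ 1) (μ ν : F) (hμν : μ ≠ ν) (h1 : μ * ν = 1)
    (hμE : S.M.X.HasEigenvalue μ) (hνE : S.M.X.HasEigenvalue ν) :
    Submodule.map S.M.G0 (Module.End.eigenspace S.M.X μ)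
        = Module.End.eigenspace S.M.X ν ∧
      Submodule.map S.M.G0 (Module.End.eigenspace S.M.X ν)
        = Module.End.eigenspace S.M.X μ := by
  have hμ0 : μ ≠ 0 := left_ne_zero_of_mul_eq_one h1
  have hνinv : ν = μ⁻¹ := eq_inv_of_mul_eq_one_left (by rwa [mul_comm] at h1)
  subst hνinv
  by_cases hWμ : ∀ b : ℕ, Even b → μ * μ ≠ q ^ b
  · exact engine_aux S hμ0 hqru hWμ hμE hνE
  · push_neg at hWμ
    obtain ⟨b, hbe, hbq⟩ := hWμ
    have hWν : ∀ b' : ℕ, Even b' → μ⁻¹ * μ⁻¹ ≠ q ^ b' := by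
      intro b' hbe' h'
      have h2 : q ^ (b + b') = 1 := by
        rw [pow_add, ← hbq, ← h']
        field_simp
      rcases Nat.eq_zero_or_pos (b + b') with h0 | hpos
      · have hb0 : b = 0 := by omega
        rw [hb0, pow_zero] at hbq
        exact hμν (inv_eq_of_mul_eq_one_right hbq).symm
      · exact hqru (b + b') hpos h2
    have hμE' : S.M.X.HasEigenvalue μ⁻¹⁻¹ := by rwa [inv_inv]
    have h2 := engine_aux S (μ := μ⁻¹) (inv_ne_zero hμ0) hqru hWν hνE hμE'
    rw [inv_inv] at h2
    exact ⟨h2.2, h2.1⟩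

end Setup

end HqModAux
namespace HqModAux

open Module Submodule

variable {F : Type*} [Field F] {q : F} {V : Type*} [AddCommGroup V] [Module F V]

/-- Schur-type lemma: each `t i + s i` acts as a scalar on an irreducible module. -/
lemma scalar_of [IsAlgClosed F] [FiniteDimensional F V] (M : HqMod F q V)
    (hirr : M.Irreducible) (i : Fin 4) :
    ∃ a : F, M.t i + M.s i = a • (1 : Module.End F V) := by
  have : Nontrivial V := hirr.1
  obtain ⟨a, ha⟩ := Module.End.exists_eigenvalue (M.t i + M.s i)
  refine ⟨a, ?_⟩
  have hinv : ∀ j, ∀ v ∈ Module.End.eigenspace (M.t i + M.s i) a,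
      M.t j v ∈ Module.End.eigenspace (M.t i + M.s i) a := by
    intro j v hv
    rw [Module.End.mem_eigenspace_iff] at hv ⊢
    have hcomm := M.central i j
    calc (M.t i + M.s i) (M.t j v) = ((M.t i + M.s i) * M.t j) v := rfl
      _ = (M.t j * (M.t i + M.s i)) v := by rw [hcomm]
      _ = M.t j ((M.t i + M.s i) v) := rfl
      _ = a • M.t j v := by rw [hv, map_smul]
  rcases hirr.2 _ hinv with hbot | htop
  · exact absurd hbot ha
  · ext v
    have hv : v ∈ Module.End.eigenspace (M.t i + M.s i) a := htop ▸ Submodule.mem_top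
    rw [Module.End.mem_eigenspace_iff] at hv
    simpa using hv

/-- the rotated module: `(t 2, t 3, t 0, t 1)`. -/
def rot (M : HqMod F q V) : HqMod F q V where
  t i := M.t (i + 2)
  s i := M.s (i + 2)
  ts i := M.ts _
  st i := M.st _
  central i j := M.central _ _
  prodEq := by
    show M.t (0 + 2) * M.t (1 + 2) * M.t (2 + 2) * M.t (3 + 2) = _
    show M.t 2 * M.t 3 * M.t 0 * M.t 1 = _
    have h23 : M.t 2 * M.t 3 = q⁻¹ • (M.s 1 * M.s 0) := by
      have h : M.t 2 * M.t 3
          = (M.s 1 * M.t 1) * (M.t 2 * M.t 3) * (1 : Module.End F V) := by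
        rw [M.st, one_mul, mul_one]
      have h0 : M.t 2 * M.t 3
          = M.s 1 * (M.s 0 * (M.t 0 * M.t 1 * M.t 2 * M.t 3)) := by
        rw [show M.s 1 * (M.s 0 * (M.t 0 * M.t 1 * M.t 2 * M.t 3))
            = M.s 1 * (M.s 0 * M.t 0) * M.t 1 * (M.t 2 * M.t 3) from by noncomm_ring,
          M.st, mul_one, M.st, one_mul]
      rw [h0, M.prodEq, mul_smul_comm, mul_smul_comm, mul_one]
    rw [h23, smul_mul_assoc, smul_mul_assoc]
    congr 1
    rw [show M.s 1 * M.s 0 * M.t 0 * M.t 1 = M.s 1 * (M.s 0 * M.t 0) * M.t 1 from by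
      noncomm_ring, M.st, mul_one, M.st]

lemma rot_X (M : HqMod F q V) : (rot M).X = q⁻¹ • M.Xinv := by
  show M.t (3 + 2) * M.t (0 + 2) = _
  show M.t 1 * M.t 2 = _
  exact t1_mul_t2 M

lemma rot_G0 (M : HqMod F q V) : (rot M).G0 = M.G2 := rfl

lemma rot_eigenspace (M : HqMod F q V) (hq : q ≠ 0) {lam : F} (hlam : lam ≠ 0) :
    Module.End.eigenspace (rot M).X lam = Module.End.eigenspace M.X (q⁻¹ * lam⁻¹) := by
  ext v
  rw [Module.End.mem_eigenspace_iff, Module.End.mem_eigenspace_iff, rot_X]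
  constructor
  · intro h
    have h2 : M.Xinv v = (q * lam) • v := by
      have := congrArg (fun w => q • w) h
      simp only [LinearMap.smul_apply, smul_smul] at this
      rwa [mul_inv_cancel₀ hq, one_smul] at this
    have h3 : M.X (M.Xinv v) = v := by rw [← Module.End.mul_apply, X_mul_Xinv]; rfl
    rw [h2, map_smul] at h3
    have h4 := congrArg (fun w => (q * lam)⁻¹ • w) h3.symm
    simp only [smul_smul] at h4
    rw [inv_mul_cancel₀ (mul_ne_zero hq hlam), one_smul] at h4
    rw [← h4, mul_inv]
  · intro h
    have h2 : M.Xinv (M.X v) = v := by rw [← Module.End.mul_apply, Xinv_mul_X]; rfl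
    rw [h, map_smul] at h2
    have h3 : M.Xinv v = (q * lam) • v := by
      have h4 := congrArg (fun w => (q * lam) • w) h2
      simp only [smul_smul] at h4
      rw [show q * lam * (q⁻¹ * lam⁻¹) = q * q⁻¹ * (lam * lam⁻¹) from by ring,
        mul_inv_cancel₀ hq, mul_inv_cancel₀ hlam, one_mul, one_smul] at h4
      exact h4
    show (q⁻¹ • M.Xinv) v = lam • v
    simp only [LinearMap.smul_apply]
    rw [h3, smul_smul, show q⁻¹ * (q * lam) = q⁻¹ * q * lam from by ring,
      inv_mul_cancel₀ hq, one_mul]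

lemma rot_diag (M : HqMod F q V) (hq : q ≠ 0) (hX : Diagonalizable M.X) :
    Diagonalizable (rot M).X := by
  unfold Diagonalizable at hX ⊢
  rw [← top_le_iff, ← hX]
  apply iSup_le
  intro ρ
  by_cases hρ : ρ = 0
  · rw [hρ, eigen_zero]
    exact bot_le
  · have h1 : Module.End.eigenspace M.X ρ
        = Module.End.eigenspace (rot M).X (q⁻¹ * ρ⁻¹) := by
      rw [rot_eigenspace M hq (mul_ne_zero (inv_ne_zero hq) (inv_ne_zero hρ))]
      rw [mul_inv, inv_inv, inv_inv, show q⁻¹ * (q * ρ) = q⁻¹ * q * ρ from by ring,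
        inv_mul_cancel₀ hq, one_mul]
    rw [h1]
    exact le_iSup (fun lam => Module.End.eigenspace (rot M).X lam) (q⁻¹ * ρ⁻¹)

lemma rot_irr (M : HqMod F q V) (hirr : M.Irreducible) : (rot M).Irreducible := by
  refine ⟨hirr.1, fun W hW => hirr.2 W (fun i v hv => ?_)⟩
  have h4 : i + 2 + 2 = i := by
    rw [add_assoc, show (2 + 2 : Fin 4) = 0 from by decide, add_zero]
  have h : M.t (i + 2 + 2) v ∈ W := hW (i + 2) v hv
  rwa [h4] at h

end HqModAux
theorem stmt17 {F : Type*} [Field F] [IsAlgClosed F] {q : F}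
    (hq : q ≠ 0) (hqru : ∀ m : ℕ, 1 ≤ m → q ^ m ≠ 1)
    {V : Type*} [AddCommGroup V] [Module F V] [FiniteDimensional F V]
    (M : HqMod F q V) (hirr : M.Irreducible) (hX : Diagonalizable M.X)
    (μ ν : F) (hμν : μ ≠ ν) (hμ : Module.End.HasEigenvalue M.X μ)
    (hν : Module.End.HasEigenvalue M.X ν) :
    (μ * ν = 1 →
      Submodule.map M.G0 (Module.End.eigenspace M.X μ) = Module.End.eigenspace M.X ν ∧
      Submodule.map M.G0 (Module.End.eigenspace M.X ν) = Module.End.eigenspace M.X μ) ∧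
    (μ * ν = (q ^ 2)⁻¹ →
      Submodule.map M.G2 (Module.End.eigenspace M.X μ) = Module.End.eigenspace M.X ν ∧
      Submodule.map M.G2 (Module.End.eigenspace M.X ν) = Module.End.eigenspace M.X μ) := by
  classical
  obtain ⟨a0, p0⟩ := HqModAux.scalar_of M hirr 0
  obtain ⟨a1, p1⟩ := HqModAux.scalar_of M hirr 1
  obtain ⟨a2, p2⟩ := HqModAux.scalar_of M hirr 2
  obtain ⟨a3, p3⟩ := HqModAux.scalar_of M hirr 3
  constructor
  · intro h1
    exact HqModAux.Setup.engine
      (⟨M, hq, hqru, hirr, hX, a0, a3, a2, a1, p0, p1, p2, p3⟩ : HqModAux.Setup F q V)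
      hqru μ ν hμν h1 hμ hν
  · intro h2
    have hq2 : ((q : F) ^ 2)⁻¹ ≠ 0 := inv_ne_zero (pow_ne_zero 2 hq)
    have hμ0 : μ ≠ 0 := fun h => hq2 (by rw [← h2, h, zero_mul])
    have hν0 : ν ≠ 0 := fun h => hq2 (by rw [← h2, h, mul_zero])
    have hE : ∀ lam : F, lam ≠ 0 →
        Module.End.eigenspace (HqModAux.rot M).X (q * lam)⁻¹
          = Module.End.eigenspace M.X lam := by
      intro lam h0
      rw [HqModAux.rot_eigenspace M hq (inv_ne_zero (mul_ne_zero hq h0))]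
      congr 1
      rw [inv_inv, show q⁻¹ * (q * lam) = q⁻¹ * q * lam from by ring,
        inv_mul_cancel₀ hq, one_mul]
    have hμν' : (q * μ)⁻¹ ≠ (q * ν)⁻¹ := by
      intro h
      exact hμν (mul_left_cancel₀ hq (inv_injective h))
    have h1' : (q * μ)⁻¹ * (q * ν)⁻¹ = 1 := by
      have hm : (q * μ) * (q * ν) = 1 := by
        rw [show (q * μ) * (q * ν) = q ^ 2 * (μ * ν) from by ring, h2,
          mul_inv_cancel₀ (pow_ne_zero 2 hq)]
      rw [← mul_inv, hm, inv_one]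
    have hμE' : (HqModAux.rot M).X.HasEigenvalue ((q * μ)⁻¹) := by
      show Module.End.eigenspace (HqModAux.rot M).X ((q * μ)⁻¹) ≠ ⊥
      rw [hE μ hμ0]
      exact hμ
    have hνE' : (HqModAux.rot M).X.HasEigenvalue ((q * ν)⁻¹) := by
      show Module.End.eigenspace (HqModAux.rot M).X ((q * ν)⁻¹) ≠ ⊥
      rw [hE ν hν0]
      exact hν
    obtain ⟨g1, g2⟩ := HqModAux.Setup.engine
      (⟨HqModAux.rot M, hq, hqru, HqModAux.rot_irr M hirr, HqModAux.rot_diag M hq hX,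
        a2, a1, a0, a3,
        (by rw [show (HqModAux.rot M).t 0 + (HqModAux.rot M).s 0 = M.t 2 + M.s 2 from rfl]
            exact p2),
        (by rw [show (HqModAux.rot M).t 1 + (HqModAux.rot M).s 1 = M.t 3 + M.s 3 from rfl]
            exact p3),
        (by rw [show (HqModAux.rot M).t 2 + (HqModAux.rot M).s 2 = M.t 0 + M.s 0 from rfl]
            exact p0),
        (by rw [show (HqModAux.rot M).t 3 + (HqModAux.rot M).s 3 = M.t 1 + M.s 1 from rfl]
            exact p1)⟩ : HqModAux.Setup F q V)
      hqru ((q * μ)⁻¹) ((q * ν)⁻¹) hμν' h1' hμE' hνE'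
    constructor
    · have g1' : Submodule.map M.G2 (Module.End.eigenspace (HqModAux.rot M).X ((q * μ)⁻¹))
          = Module.End.eigenspace (HqModAux.rot M).X ((q * ν)⁻¹) := g1
      rwa [hE μ hμ0, hE ν hν0] at g1'
    · have g2' : Submodule.map M.G2 (Module.End.eigenspace (HqModAux.rot M).X ((q * ν)⁻¹))
          = Module.End.eigenspace (HqModAux.rot M).X ((q * μ)⁻¹) := g2
      rwa [hE ν hν0, hE μ hμ0] at g2'
end
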